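/- arXiv:1605.02298 — 4 statements merged into one kernel-verified Lean document; each statement's English description precedes it below -/
import Mathlib

section
/- Let r ≥ 2 and n ≥ 0 be integers, and write (1 + x + x^2 + ... + x^{r-2})^n = h_0(x^r) + x·h_1(x^r) + ... + x^{r-1}·h_{r-1}(x^r), where h_0, ..., h_{r-1} are the r-sections of the left-hand side. Then each h_j(x) has only real roots. -/
open Polynomial Finset

/-- A real polynomial has only real roots: the number of real roots
(with multiplicity) equals its degree. (The zero polynomial counts.) -/
def RealRooted (p : Polynomial ℝ) : Prop :=
  p.roots.card = p.natDegree

/-- The list of real roots of `p`, sorted in increasing order. -/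
noncomputable def rootList (p : Polynomial ℝ) : List ℝ :=
  p.roots.sort (· ≤ ·)

/-- `Interlaces g f` means `g ≼ f`: both are real-rooted with positive leading
coefficients, `deg f ∈ {deg g, deg g + 1}`, and the roots alternate
(`v_n ≤ u_n ≤ v_{n-1} ≤ ⋯ ≤ v_1 ≤ u_1`, resp. `u_n ≤ v_{n-1} ≤ ⋯ ≤ v_1 ≤ u_1`,
indexed in decreasing order). The zero polynomial interlaces and is
interlaced by everything, by convention. -/
def Interlaces (g f : Polynomial ℝ) : Prop :=
  g = 0 ∨ f = 0 ∨
    (RealRooted f ∧ RealRooted g ∧ 0 < f.leadingCoeff ∧ 0 < g.leadingCoeff ∧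
      ((f.natDegree = g.natDegree ∧
          (∀ i < f.natDegree, (rootList g).getD i 0 ≤ (rootList f).getD i 0) ∧
          (∀ i, i + 1 < f.natDegree →
            (rootList f).getD i 0 ≤ (rootList g).getD (i + 1) 0)) ∨
       (f.natDegree = g.natDegree + 1 ∧
          (∀ i < g.natDegree, (rootList f).getD i 0 ≤ (rootList g).getD i 0) ∧
          (∀ i, i + 1 < f.natDegree →
            (rootList g).getD i 0 ≤ (rootList f).getD (i + 1) 0))))

/-- All coefficients of `p` are nonnegative. -/
def NonnegCoeffs (p : Polynomial ℝ) : Prop :=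
  ∀ k, 0 ≤ p.coeff k

/-!
Write `f = (1 + x + ⋯ + x^(r-2))^n` and `v_k = P_k(z)`, where `P_k = contract r (X^k * f)`
collects the coefficients of `x^k f` at the multiples of `r`. Then `P_(r-j) = X * h_j`,
`v_(k+r) = z v_k`, and multiplying `f` by `1 + ⋯ + x^(L-1)` replaces `v_k` by the window sum
`v_k + ⋯ + v_(k+L-1)`.

Fix `z` in the open upper half-plane. The invariant is that the `v_k` admit arguments `φ_k`,
nondecreasing in `k`, with `φ_(k+r) = φ_k + arg z`. For `L ≤ r` every window then lies in a
closed sector of opening at most `arg z < π`, so its sum vanishes only if all its terms do, and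
the argument of the sum, read inside that sector, is again nondecreasing in `k`: with `s_k` the
window sums, `s_(k+1) = s_k + v_(k+L) - v_k` gives `0 ≤ Im (conj s_k * s_(k+1))`. Hence
`h_j(z) ≠ 0` unless `h_j = 0`.
-/

open Complex ComplexConjugate
open scoped Real

lemma conj_mul_of_polar {u v : ℂ} {θ ψ : ℝ} (hu : u = ‖u‖ * cexp (θ * I))
    (hv : v = ‖v‖ * cexp (ψ * I)) :
    conj u * v = ↑(‖u‖ * ‖v‖) * cexp ((ψ - θ : ℝ) * I) := by
  conv_lhs => rw [hu, hv]
  rw [map_mul, conj_ofReal, ← exp_conj, map_mul, conj_ofReal, conj_I]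
  push_cast
  rw [mul_mul_mul_comm, ← exp_add]
  ring_nf

lemma re_conj_mul_of_polar {u v : ℂ} {θ ψ : ℝ} (hu : u = ‖u‖ * cexp (θ * I))
    (hv : v = ‖v‖ * cexp (ψ * I)) :
    (conj u * v).re = ‖u‖ * ‖v‖ * Real.cos (ψ - θ) := by
  rw [conj_mul_of_polar hu hv, re_ofReal_mul, exp_ofReal_mul_I_re]

lemma im_conj_mul_of_polar {u v : ℂ} {θ ψ : ℝ} (hu : u = ‖u‖ * cexp (θ * I))
    (hv : v = ‖v‖ * cexp (ψ * I)) :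
    (conj u * v).im = ‖u‖ * ‖v‖ * Real.sin (ψ - θ) := by
  rw [conj_mul_of_polar hu hv, im_ofReal_mul, exp_ofReal_mul_I_im]

lemma exp_ofReal_mul_I_eq_norm_mul (θ : ℝ) : cexp (θ * I) = ‖cexp (θ * I)‖ * cexp (θ * I) := by
  rw [norm_exp_ofReal_mul_I, ofReal_one, one_mul]

lemma conj_exp_mul_of_polar {u : ℂ} {θ : ℝ} (hu : u = ‖u‖ * cexp (θ * I)) (c : ℝ) :
    conj (cexp (c * I)) * u = ‖conj (cexp (c * I)) * u‖ * cexp ((θ - c : ℝ) * I) := by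
  rw [norm_mul, Complex.norm_conj, conj_mul_of_polar (exp_ofReal_mul_I_eq_norm_mul c) hu]

lemma exp_ofReal_mul_I_mul_conj (θ : ℝ) : cexp (θ * I) * conj (cexp (θ * I)) = 1 := by
  rw [mul_conj, normSq_eq_norm_sq, norm_exp_ofReal_mul_I]; simp

section Sector

variable {ι : Type*} {s : Finset ι} {u : ι → ℂ} {θ : ι → ℝ} {β : ℝ}

lemma im_sum_nonneg_of_sector (hβ : β ≤ π) (hθ : ∀ i ∈ s, θ i ∈ Set.Icc 0 β)
    (hu : ∀ i ∈ s, u i = ‖u i‖ * cexp (θ i * I)) : 0 ≤ (∑ i ∈ s, u i).im := by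
  rw [im_sum]
  refine sum_nonneg fun i hi => ?_
  obtain ⟨hθ₀, hθβ⟩ := hθ i hi
  have h := im_conj_mul_of_polar (u := 1) (θ := 0) (by simp) (hu i hi)
  rw [map_one, one_mul, norm_one, one_mul, sub_zero] at h
  rw [h]
  exact mul_nonneg (norm_nonneg _) (Real.sin_nonneg_of_nonneg_of_le_pi hθ₀ (hθβ.trans hβ))

lemma cos_mul_sum_norm_le_re_of_sector (hβ : β ≤ π) (hθ : ∀ i ∈ s, θ i ∈ Set.Icc 0 β)
    (hu : ∀ i ∈ s, u i = ‖u i‖ * cexp (θ i * I)) :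
    Real.cos (β / 2) * ∑ i ∈ s, ‖u i‖ ≤ (conj (cexp ((β / 2 : ℝ) * I)) * ∑ i ∈ s, u i).re := by
  rw [mul_sum, mul_sum, re_sum]
  refine sum_le_sum fun i hi => ?_
  obtain ⟨hθ₀, hθβ⟩ := hθ i hi
  rw [re_conj_mul_of_polar (exp_ofReal_mul_I_eq_norm_mul _) (hu i hi), norm_exp_ofReal_mul_I,
    one_mul, mul_comm, ← Real.cos_abs (θ i - β / 2)]
  gcongr
  exact Real.cos_le_cos_of_nonneg_of_le_pi (abs_nonneg _) (by linarith)
    (abs_le.2 ⟨by linarith, by linarith⟩)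

lemma eq_zero_of_sum_eq_zero_of_sector (hβ0 : 0 ≤ β) (hβ : β < π)
    (hθ : ∀ i ∈ s, θ i ∈ Set.Icc 0 β)
    (hu : ∀ i ∈ s, u i = ‖u i‖ * cexp (θ i * I)) (hsum : ∑ i ∈ s, u i = 0) :
    ∀ i ∈ s, u i = 0 := by
  have hbound := cos_mul_sum_norm_le_re_of_sector hβ.le hθ hu
  rw [hsum, mul_zero, zero_re] at hbound
  have hcos : 0 < Real.cos (β / 2) :=
    Real.cos_pos_of_mem_Ioo ⟨by linarith [Real.pi_pos], by linarith⟩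
  have := (sum_eq_zero_iff_of_nonneg fun i _ => norm_nonneg (u i)).1
    (le_antisymm (nonpos_of_mul_nonpos_right hbound hcos) (sum_nonneg fun i _ => norm_nonneg _))
  exact fun i hi => norm_eq_zero.1 (this i hi)

lemma arg_sum_mem_Icc_of_sector (hβ0 : 0 ≤ β) (hβ : β ≤ π) (hθ : ∀ i ∈ s, θ i ∈ Set.Icc 0 β)
    (hu : ∀ i ∈ s, u i = ‖u i‖ * cexp (θ i * I)) :
    arg (∑ i ∈ s, u i) ∈ Set.Icc 0 β := by
  set w := ∑ i ∈ s, u i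
  have hbound := cos_mul_sum_norm_le_re_of_sector hβ hθ hu
  have harg0 : 0 ≤ arg w := arg_nonneg_iff.2 (im_sum_nonneg_of_sector hβ hθ hu)
  refine ⟨harg0, ?_⟩
  rcases eq_or_ne w 0 with hw | hw
  · rw [hw, arg_zero]; exact hβ0
  by_contra! hlt
  have hcos : Real.cos (arg w - β / 2) < Real.cos (β / 2) :=
    Real.cos_lt_cos_of_nonneg_of_le_pi (by linarith) (by linarith [arg_le_pi w]) (by linarith)
  rw [re_conj_mul_of_polar (exp_ofReal_mul_I_eq_norm_mul _) (norm_mul_exp_arg_mul_I w).symm,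
    norm_exp_ofReal_mul_I, one_mul] at hbound
  have hnorm : ‖w‖ ≤ ∑ i ∈ s, ‖u i‖ := norm_sum_le _ _
  have hpos : 0 < ‖w‖ := norm_pos_iff.2 hw
  have hcos0 : 0 ≤ Real.cos (β / 2) :=
    Real.cos_nonneg_of_mem_Icc ⟨by linarith [Real.pi_pos], by linarith⟩
  nlinarith [mul_le_mul_of_nonneg_left hnorm hcos0]

end Sector

-- the argument of `w` taken in `(φ - π, φ + π]`
noncomputable def argFrom (φ : ℝ) (w : ℂ) : ℝ := φ + arg (conj (cexp (φ * I)) * w)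

lemma eq_polar_argFrom (φ : ℝ) (w : ℂ) : w = ‖w‖ * cexp (argFrom φ w * I) := by
  have hnorm : ‖conj (cexp (φ * I)) * w‖ = ‖w‖ := by
    rw [norm_mul, Complex.norm_conj, norm_exp_ofReal_mul_I, one_mul]
  calc w = cexp (φ * I) * (conj (cexp (φ * I)) * w) := by
        rw [← mul_assoc, exp_ofReal_mul_I_mul_conj, one_mul]
    _ = ‖w‖ * cexp (argFrom φ w * I) := by
        conv_lhs => rw [← norm_mul_exp_arg_mul_I (conj (cexp (φ * I)) * w), hnorm]
        rw [argFrom, ofReal_add, add_mul, exp_add]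
        ring

lemma argFrom_of_polar {φ : ℝ} {w : ℂ} (hw : w = ‖w‖ * cexp (φ * I)) : argFrom φ w = φ := by
  rw [argFrom, conj_exp_mul_of_polar hw, sub_self, ofReal_zero, zero_mul, exp_zero, mul_one,
    arg_ofReal_of_nonneg (norm_nonneg _), add_zero]

lemma argFrom_add_arg_mul {z : ℂ} (hz : z ≠ 0) (φ : ℝ) (w : ℂ) :
    argFrom (φ + arg z) (z * w) = argFrom φ w + arg z := by
  have hrot : conj (cexp ((φ + arg z : ℝ) * I)) * (z * w)
      = ‖z‖ * (conj (cexp (φ * I)) * w) := by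
    have hz' : conj (cexp (arg z * I)) * z = ‖z‖ := by
      calc conj (cexp (arg z * I)) * z = conj (cexp (arg z * I)) * (‖z‖ * cexp (arg z * I)) := by
            rw [norm_mul_exp_arg_mul_I]
        _ = ‖z‖ := by linear_combination (‖z‖ : ℂ) * exp_ofReal_mul_I_mul_conj (arg z)
    rw [ofReal_add, add_mul, exp_add, map_mul]
    linear_combination conj (cexp (φ * I)) * w * hz'
  rw [argFrom, argFrom, hrot, arg_real_mul _ (norm_pos_iff.2 hz)]
  ring

def windowSum (L : ℕ) (V : ℕ → ℂ) (k : ℕ) : ℂ := ∑ i ∈ range L, V (k + i)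

lemma windowSum_succ (L : ℕ) (V : ℕ → ℂ) (k : ℕ) :
    windowSum L V (k + 1) = windowSum L V k + V (k + L) - V k := by
  have h := (sum_range_succ (fun i => V (k + i)) L).symm.trans
    (sum_range_succ' (fun i => V (k + i)) L)
  simp only [windowSum, add_zero, ← add_assoc, add_right_comm k 1] at h ⊢
  linear_combination -h

lemma windowSum_add_period {r : ℕ} {z : ℂ} {V : ℕ → ℂ} (hV : ∀ k, V (k + r) = z * V k)
    (L k : ℕ) : windowSum L V (k + r) = z * windowSum L V k := by
  simp only [windowSum, mul_sum, ← hV, add_right_comm]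

def HasMonotoneArg (r : ℕ) (z : ℂ) (V : ℕ → ℂ) : Prop :=
  ∃ φ : ℕ → ℝ, Monotone φ ∧ (∀ k, φ (k + r) = φ k + arg z) ∧ ∀ k, V k = ‖V k‖ * cexp (φ k * I)

section WindowSum

variable {L : ℕ} {V : ℕ → ℂ} {φ : ℕ → ℝ}

lemma rotated_window_polar (hV : ∀ k, V k = ‖V k‖ * cexp (φ k * I)) (k : ℕ) :
    ∀ i ∈ range L, conj (cexp (φ k * I)) * V (k + i)
      = ‖conj (cexp (φ k * I)) * V (k + i)‖ * cexp ((φ (k + i) - φ k : ℝ) * I) :=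
  fun i _ => conj_exp_mul_of_polar (hV (k + i)) (φ k)

lemma rotated_window_angle (hφ : Monotone φ) (k : ℕ) :
    ∀ i ∈ range L, φ (k + i) - φ k ∈ Set.Icc 0 (φ (k + (L - 1)) - φ k) := by
  intro i hi
  have hi := mem_range.1 hi
  constructor
  · linarith [hφ (Nat.le_add_right k i)]
  · linarith [hφ (show k + i ≤ k + (L - 1) by omega)]

lemma argFrom_windowSum_mem_Icc (hφ : Monotone φ) (hV : ∀ k, V k = ‖V k‖ * cexp (φ k * I))
    {k : ℕ} (hwidth : φ (k + (L - 1)) - φ k ≤ π) :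
    argFrom (φ k) (windowSum L V k) ∈ Set.Icc (φ k) (φ (k + (L - 1))) := by
  have h := arg_sum_mem_Icc_of_sector (by linarith [hφ (Nat.le_add_right k (L - 1))]) hwidth
    (rotated_window_angle hφ k) (rotated_window_polar hV k)
  rw [← mul_sum] at h
  rw [argFrom, windowSum]
  exact ⟨by linarith [h.1], by linarith [h.2]⟩

lemma eq_zero_of_windowSum_eq_zero (hφ : Monotone φ) (hV : ∀ k, V k = ‖V k‖ * cexp (φ k * I))
    {k : ℕ} (hwidth : φ (k + (L - 1)) - φ k < π) (h0 : windowSum L V k = 0) :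
    ∀ i < L, V (k + i) = 0 := by
  have h := eq_zero_of_sum_eq_zero_of_sector (by linarith [hφ (Nat.le_add_right k (L - 1))])
    hwidth (rotated_window_angle hφ k) (rotated_window_polar hV k)
    (by rw [← mul_sum]; exact mul_eq_zero_of_right _ h0)
  intro i hi
  exact (mul_eq_zero.1 (h i (mem_range.2 hi))).resolve_left
    (by simp [Complex.exp_ne_zero])

lemma argFrom_windowSum_le_succ (hφ : Monotone φ) (hV : ∀ k, V k = ‖V k‖ * cexp (φ k * I))
    (hwidth : ∀ k, φ (k + L) - φ k < π) (k : ℕ) :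
    argFrom (φ k) (windowSum L V k) ≤ argFrom (φ (k + 1)) (windowSum L V (k + 1)) := by
  have hwidth' : ∀ k, φ (k + (L - 1)) - φ k < π := fun k => by
    linarith [hwidth k, hφ (show k + (L - 1) ≤ k + L by omega)]
  set s := windowSum L V k
  set s' := windowSum L V (k + 1)
  obtain ⟨hψ₁, hψ₂⟩ := argFrom_windowSum_mem_Icc hφ hV (hwidth' k).le
  obtain ⟨hψ'₁, hψ'₂⟩ := argFrom_windowSum_mem_Icc hφ hV (hwidth' (k + 1)).le
  have hφk := hφ (Nat.le_succ k)
  by_cases hs : s = 0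
  · rw [hs, argFrom_of_polar (by simp)]
    linarith
  have hL : 0 < L := Nat.pos_of_ne_zero fun hL => hs (by simp [s, windowSum, hL])
  by_cases hs' : s' = 0
  · have hVk : s = V k := by
      have hlast := eq_zero_of_windowSum_eq_zero hφ hV (hwidth' (k + 1)) hs' (L - 1) (by omega)
      rw [show k + 1 + (L - 1) = k + L by omega] at hlast
      have h : s' = s + V (k + L) - V k := windowSum_succ L V k
      rw [hs', hlast] at h
      linear_combination -h
    rw [hVk, argFrom_of_polar (hV k)]
    linarith
  have hcross : 0 ≤ (conj s * s').im := by
    have hself : (conj s * s).im = 0 := by rw [mul_comm, mul_conj, ofReal_im]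
    rw [show s' = s + V (k + L) - V k from windowSum_succ L V k, mul_sub, mul_add, sub_im,
      add_im, hself, zero_add, im_conj_mul_of_polar (eq_polar_argFrom (φ k) s) (hV _),
      im_conj_mul_of_polar (eq_polar_argFrom (φ k) s) (hV _)]
    have h1 : 0 ≤ Real.sin (φ (k + L) - argFrom (φ k) s) :=
      Real.sin_nonneg_of_nonneg_of_le_pi (by linarith [hφ (show k + (L - 1) ≤ k + L by omega)])
        (by linarith [hwidth k])
    have h2 : Real.sin (φ k - argFrom (φ k) s) ≤ 0 :=
      Real.sin_nonpos_of_nonpos_of_neg_pi_le (by linarith) (by linarith [hwidth' k])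
    have h3 := mul_nonneg (norm_nonneg s) (norm_nonneg (V (k + L)))
    have h4 := mul_nonneg (norm_nonneg s) (norm_nonneg (V k))
    nlinarith
  rw [im_conj_mul_of_polar (eq_polar_argFrom (φ k) s) (eq_polar_argFrom (φ (k + 1)) s')] at hcross
  by_contra! hlt
  have hsin : Real.sin (argFrom (φ (k + 1)) s' - argFrom (φ k) s) < 0 :=
    Real.sin_neg_of_neg_of_neg_pi_lt (by linarith)
      (by linarith [hwidth k, hφ (show k + (L - 1) ≤ k + L by omega)])
  have hpos : 0 < ‖s‖ * ‖s'‖ := mul_pos (norm_pos_iff.2 hs) (norm_pos_iff.2 hs')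
  nlinarith

end WindowSum

section Twist

variable {r L : ℕ} {z : ℂ} {V : ℕ → ℂ}

lemma window_width_lt_pi (hz : 0 < z.im) (hL : L ≤ r) {φ : ℕ → ℝ} (hφ : Monotone φ)
    (htwist : ∀ k, φ (k + r) = φ k + arg z) (k : ℕ) : φ (k + L) - φ k < π := by
  linarith [hφ (show k + L ≤ k + r by omega), htwist k, arg_lt_pi_iff.2 (Or.inr hz.ne')]

theorem hasMonotoneArg_windowSum (hz : 0 < z.im) (hL : L ≤ r) (hV : ∀ k, V (k + r) = z * V k)
    (h : HasMonotoneArg r z V) : HasMonotoneArg r z (windowSum L V) := by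
  obtain ⟨φ, hφ, htwist, hpolar⟩ := h
  have hz0 : z ≠ 0 := fun h => by simp [h] at hz
  have hmono := argFrom_windowSum_le_succ hφ hpolar (window_width_lt_pi hz hL hφ htwist)
  refine ⟨fun k => argFrom (φ k) (windowSum L V k), monotone_nat_of_le_succ hmono,
    fun k => ?_, fun k => eq_polar_argFrom _ _⟩
  dsimp only
  rw [htwist, windowSum_add_period hV, argFrom_add_arg_mul hz0]

theorem HasMonotoneArg.eq_zero_of_windowSum_eq_zero (hz : 0 < z.im) (hL : L ≤ r)
    (h : HasMonotoneArg r z V) {k : ℕ} (h0 : windowSum L V k = 0) : ∀ i < L, V (k + i) = 0 := by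
  obtain ⟨φ, hφ, htwist, hpolar⟩ := h
  refine _root_.eq_zero_of_windowSum_eq_zero hφ hpolar ?_ h0
  linarith [window_width_lt_pi hz hL hφ htwist k, hφ (show k + (L - 1) ≤ k + L by omega)]

end Twist

theorem realRooted_of_forall_im_pos {p : ℝ[X]}
    (H : ∀ z : ℂ, 0 < z.im → aeval z p = 0 → p = 0) : RealRooted p := by
  rcases eq_or_ne p 0 with rfl | hp
  · simp [RealRooted]
  have hreal : ∀ a : ℂ, aeval a p = 0 → a.im = 0 := by
    intro a ha
    rcases lt_trichotomy a.im 0 with hneg | hzero | hpos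
    · refine absurd (H (conj a) (by simpa using hneg) ?_) hp
      rw [← conjAe_coe, aeval_algHom_apply, ha, map_zero]
    · exact hzero
    · exact absurd (H a hpos ha) hp
  rw [RealRooted, ← splits_iff_card_roots]
  refine (IsAlgClosed.splits _).of_splits_map (algebraMap ℝ ℂ) fun a ha => ?_
  have ha' := hreal a (by simpa [eval_map_algebraMap] using (mem_roots'.1 ha).2)
  exact ⟨a.re, Complex.ext (by simp) (by simp [ha'])⟩

section Contract

variable {r : ℕ}

theorem contract_sum (hr : r ≠ 0) {ι : Type*} (s : Finset ι) (f : ι → ℝ[X]) :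
    contract r (∑ i ∈ s, f i) = ∑ i ∈ s, contract r (f i) := by
  ext n
  simp only [coeff_contract hr, finsetSum_coeff]

theorem contract_X_pow (hr : r ≠ 0) (a : ℕ) :
    contract r (X ^ a : ℝ[X]) = if r ∣ a then X ^ (a / r) else 0 := by
  ext n
  rw [coeff_contract hr, coeff_X_pow]
  split_ifs with h1 h2 h2
  · subst h1
    rw [Nat.mul_div_cancel _ (Nat.pos_of_ne_zero hr), coeff_X_pow_self]
  · exact absurd ⟨n, by rw [← h1, mul_comm]⟩ h2
  · obtain ⟨c, rfl⟩ := h2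
    rw [coeff_X_pow, if_neg]
    rintro rfl
    exact h1 (by rw [Nat.mul_div_cancel_left _ (Nat.pos_of_ne_zero hr), mul_comm])
  · rfl

theorem contract_X_pow_add_mul (hr : r ≠ 0) (k : ℕ) (f : ℝ[X]) :
    contract r (X ^ (k + r) * f) = contract r (X ^ k * f) * X := by
  rw [← contract_mul_expand hr, expand_X, pow_add]
  ring_nf

theorem contract_X_pow_mul_geomSum (hr : r ≠ 0) (L k : ℕ) (f : ℝ[X]) :
    contract r (X ^ k * (f * ∑ i ∈ range L, X ^ i)) =
      ∑ i ∈ range L, contract r (X ^ (k + i) * f) := by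
  rw [mul_sum, mul_sum, contract_sum hr]
  refine sum_congr rfl fun i _ => ?_
  rw [pow_add]; ring_nf

end Contract

lemma pow_eq_norm_mul_exp_arg (z : ℂ) (q : ℕ) :
    z ^ q = ‖z ^ q‖ * cexp ((q * arg z : ℝ) * I) := by
  calc z ^ q = (‖z‖ * cexp (arg z * I)) ^ q := by rw [norm_mul_exp_arg_mul_I]
    _ = ‖z ^ q‖ * cexp ((q * arg z : ℝ) * I) := by
      rw [mul_pow, ← exp_nat_mul, norm_pow]
      push_cast
      ring_nf

def SectionsWindAt (r : ℕ) (z : ℂ) (f : ℝ[X]) : Prop :=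
  HasMonotoneArg r z (fun k => aeval z (contract r (X ^ k * f))) ∧
    ∀ k, aeval z (contract r (X ^ k * f)) = 0 → contract r (X ^ k * f) = 0

section SectionsWind

variable {r L : ℕ} {z : ℂ}

theorem sectionsWindAt_one (hr : r ≠ 0) (hz : 0 < z.im) : SectionsWindAt r z 1 := by
  have hr' := Nat.pos_of_ne_zero hr
  have hvalue : ∀ k, contract r (X ^ k * 1 : ℝ[X]) = if r ∣ k then X ^ (k / r) else 0 :=
    fun k => by rw [mul_one, contract_X_pow hr]
  refine ⟨⟨fun k => (k / r : ℕ) * arg z, fun a b hab => ?_, fun k => ?_, fun k => ?_⟩, fun k => ?_⟩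
  · exact mul_le_mul_of_nonneg_right (Nat.cast_le.2 (Nat.div_le_div_right hab))
      (arg_nonneg_iff.2 hz.le)
  · simp only [Nat.add_div_right k hr']
    push_cast
    ring
  · dsimp only
    rw [hvalue]
    split_ifs
    · rw [aeval_X_pow]; exact pow_eq_norm_mul_exp_arg z _
    · simp
  · rw [hvalue]
    split_ifs
    · rw [aeval_X_pow]
      intro h0
      exact absurd (pow_eq_zero_iff'.1 h0).1 fun h => by simp [h] at hz
    · exact fun _ => rfl

theorem SectionsWindAt.mul_geomSum (hr : r ≠ 0) (hz : 0 < z.im) (hL : L ≤ r) {f : ℝ[X]}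
    (h : SectionsWindAt r z f) : SectionsWindAt r z (f * ∑ i ∈ range L, X ^ i) := by
  set V := fun k => aeval z (contract r (X ^ k * f))
  have hwindow : (fun k => aeval z (contract r (X ^ k * (f * ∑ i ∈ range L, X ^ i))))
      = windowSum L V := by
    ext k
    rw [contract_X_pow_mul_geomSum hr, map_sum]
    rfl
  have hperiod : ∀ k, V (k + r) = z * V k := fun k => by
    simp only [V]
    rw [contract_X_pow_add_mul hr, map_mul, aeval_X, mul_comm]
  refine ⟨hwindow ▸ hasMonotoneArg_windowSum hz hL hperiod h.1, fun k h0 => ?_⟩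
  have hzero := h.1.eq_zero_of_windowSum_eq_zero hz hL (congrFun hwindow k ▸ h0)
  rw [contract_X_pow_mul_geomSum hr]
  exact sum_eq_zero fun i hi => h.2 _ (hzero i (mem_range.1 hi))

theorem sectionsWindAt_geomSum_pow (hr : r ≠ 0) (hz : 0 < z.im) (hL : L ≤ r) (n : ℕ) :
    SectionsWindAt r z ((∑ i ∈ range L, X ^ i) ^ n) := by
  induction n with
  | zero => exact pow_zero (∑ i ∈ range L, (X : ℝ[X]) ^ i) ▸ sectionsWindAt_one hr hz
  | succ n ih => exact pow_succ (∑ i ∈ range L, (X : ℝ[X]) ^ i) n ▸ ih.mul_geomSum hr hz hL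

end SectionsWind

theorem X_mul_eq_contract_of_sections {r : ℕ} {f : ℝ[X]} {h : Fin r → ℝ[X]}
    (hf : f = ∑ j : Fin r, X ^ (j : ℕ) * (h j).comp (X ^ r)) (j : Fin r) :
    X * h j = contract r (X ^ (r - j) * f) := by
  have hr : r ≠ 0 := j.pos.ne'
  have hterm : ∀ i : Fin r, X ^ (r - j) * (X ^ (i : ℕ) * (h i).comp (X ^ r))
      = X ^ (r - j + i) * expand ℝ r (h i) := fun i => by
    rw [← mul_assoc, ← pow_add, expand_eq_comp_X_pow]
  simp only [hf, mul_sum, hterm, contract_sum hr, contract_mul_expand hr, contract_X_pow hr]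
  rw [sum_eq_single j]
  · rw [Nat.sub_add_cancel j.is_lt.le, if_pos dvd_rfl, Nat.div_self j.pos, pow_one]
  · intro i _ hij
    rw [if_neg, zero_mul]
    rintro ⟨c, hc⟩
    have hi := i.is_lt
    have hj := j.is_lt
    rcases c with _ | _ | c
    · omega
    · exact hij (Fin.ext (by omega))
    · have := Nat.mul_le_mul_left r (show 2 ≤ c + 1 + 1 by omega)
      omega
  · simp

theorem stmt1_general (r n : ℕ) (h : Fin r → Polynomial ℝ)
    (hsec : (∑ i ∈ Finset.range (r - 1), (X : Polynomial ℝ) ^ i) ^ n =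
      ∑ j : Fin r, X ^ (j : ℕ) * (h j).comp (X ^ r)) :
    ∀ j : Fin r, RealRooted (h j) := by
  intro j
  have hr : r ≠ 0 := j.pos.ne'
  refine realRooted_of_forall_im_pos fun z hz hroot => ?_
  have hX := X_mul_eq_contract_of_sections hsec j
  have hzero := (sectionsWindAt_geomSum_pow hr hz (Nat.sub_le r 1) n).2 (r - j)
  rw [← hX, map_mul, hroot, mul_zero] at hzero
  exact (mul_eq_zero.1 (hzero rfl)).resolve_left X_ne_zero

/-- if `(1 + x + ⋯ + x^{r-2})^n = h₀(x^r) + x h₁(x^r) + ⋯ + x^{r-1} h_{r-1}(x^r)`,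
then each `h_j` has only real roots. -/
theorem stmt1 (r n : ℕ) (hr : 2 ≤ r) (h : Fin r → Polynomial ℝ)
    (hsec : (∑ i ∈ Finset.range (r - 1), (X : Polynomial ℝ) ^ i) ^ n =
      ∑ j : Fin r, X ^ (j : ℕ) * (h j).comp (X ^ r)) :
    ∀ j : Fin r, RealRooted (h j) :=
  stmt1_general r n h hsec
end

section
/- Let a, b, c, d be nonnegative reals with ad ≥ bc, and let f, g be real-rooted polynomials with nonnegative coefficients such that g interlaces f. Then the polynomial a·g + b·f interlaces c·g + d·f, provided both are nonzero. -/
open Polynomial Finset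

/-! Interlacing is read through the counting functions `N_p(x) = #{roots of p in [x, ∞)}`:
for real-rooted `g`, `f` with positive leading coefficients, `g ≼ f` iff `N_g ≤ N_f ≤ N_g + 1`.
The key fact is that `g ≼ f` implies `g ≼ α g + β f ≼ f` for `α, β ≥ 0`. Dividing out
`gcd f g` shifts all three counting functions by the same amount, after which the roots of `f`
and `g` strictly alternate. At a root of `f` the combination has the sign of `α g`, at a root
of `g` that of `β f`, so by the intermediate value theorem it has a root in each gap of the
alternating sequence (and, when `deg f > deg g`, one more below all of them, seen from the sign
at `-∞`); these are all its roots. Finally, for `a > 0`,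
`c g + d f = (c / a) (a g + b f) + ((a d - b c) / a) f` is a nonnegative combination of
`a g + b f ≼ f`, hence `a g + b f ≼ c g + d f`. -/

open Filter

section SortedList

variable {α : Type*} [LinearOrder α] {L M : List α} {d : α}

theorem List.le_getD_iff_length_sub_le_countP (hL : L.Pairwise (· ≤ ·)) {i : ℕ}
    (hi : i < L.length) (x : α) : x ≤ L.getD i d ↔ L.length - i ≤ L.countP (x ≤ ·) := by
  induction L generalizing i with
  | nil => simp at hi
  | cons a L ih =>
    rw [List.pairwise_cons] at hL
    by_cases hxa : x ≤ a
    · have hall : ∀ y ∈ a :: L, x ≤ y := by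
        simpa [hxa] using fun y hy => hxa.trans (hL.1 y hy)
      rw [List.countP_eq_length.mpr (by simpa using hall)]
      simp only [List.getD_eq_getElem _ _ hi, hall _ (List.getElem_mem hi), true_iff]
      omega
    · rcases i with _ | i
      · simp [hxa, List.countP_le_length]
      · simp only [List.getD_cons_succ, List.countP_cons, hxa, decide_false, List.length_cons]
        simpa using ih hL.2 (by simpa using hi)

theorem List.countP_le_eq_length_sub (hL : L.Pairwise (· ≤ ·)) {x : α} {j : ℕ}
    (hj : j ≤ L.length) (hlo : 0 < j → L.getD (j - 1) d < x)
    (hhi : j < L.length → x ≤ L.getD j d) : L.countP (x ≤ ·) = L.length - j := by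
  have hge : j < L.length → L.length - j ≤ L.countP (x ≤ ·) := fun h =>
    (le_getD_iff_length_sub_le_countP hL h x).mp (hhi h)
  have hlt : 0 < j → ¬ L.length - (j - 1) ≤ L.countP (x ≤ ·) := fun h hle =>
    (hlo h).not_ge ((le_getD_iff_length_sub_le_countP hL (by omega) x).mpr hle)
  have := L.countP_le_length (p := (x ≤ ·))
  omega

theorem List.getD_le_getD_shift_iff (hL : L.Pairwise (· ≤ ·)) (hM : M.Pairwise (· ≤ ·))
    {s t : ℕ} (hst : L.length + t = M.length + s) :
    (∀ j, j + t < M.length → M.getD j d ≤ L.getD (j + s) d) ↔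
      ∀ x, M.countP (x ≤ ·) ≤ L.countP (x ≤ ·) + t := by
  constructor
  · intro h x
    by_contra! hx
    set k := M.countP (x ≤ ·)
    have hkM : k ≤ M.length := M.countP_le_length
    have hxM : x ≤ M.getD (M.length - k) d :=
      (le_getD_iff_length_sub_le_countP hM (by omega) x).mpr (by omega)
    have hxL := (le_getD_iff_length_sub_le_countP hL (i := M.length - k + s) (by omega) x).mp
      (hxM.trans (h _ (by omega)))
    omega
  · intro h j hj
    have hxM := (le_getD_iff_length_sub_le_countP hM (by omega) (M.getD j d)).mp le_rfl
    exact (le_getD_iff_length_sub_le_countP hL (by omega) _).mpr (by have := h (M.getD j d); omega)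

end SortedList

noncomputable def rootCountGE (p : ℝ[X]) (x : ℝ) : ℕ :=
  p.roots.countP (x ≤ ·)

theorem rootCountGE_eq_countP_rootList (p : ℝ[X]) (x : ℝ) :
    rootCountGE p x = (rootList p).countP (x ≤ ·) := by
  rw [rootCountGE, rootList, ← Multiset.coe_countP, Multiset.sort_eq]

theorem pairwise_rootList (p : ℝ[X]) : (rootList p).Pairwise (· ≤ ·) :=
  Multiset.pairwise_sort _ _

theorem length_rootList {p : ℝ[X]} (hp : RealRooted p) : (rootList p).length = p.natDegree :=
  (Multiset.length_sort _).trans hp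

theorem getD_rootList_mem_roots {p : ℝ[X]} {i : ℕ} (hi : i < (rootList p).length) (d : ℝ) :
    (rootList p).getD i d ∈ p.roots := by
  rw [List.getD_eq_getElem _ _ hi, ← Multiset.mem_sort (· ≤ ·)]
  exact List.getElem_mem hi

theorem rootCountGE_mul {p q : ℝ[X]} (hp : p ≠ 0) (hq : q ≠ 0) (x : ℝ) :
    rootCountGE (p * q) x = rootCountGE p x + rootCountGE q x := by
  rw [rootCountGE, roots_mul (mul_ne_zero hp hq), Multiset.countP_add]; rfl

theorem rootCountGE_smul {a : ℝ} (ha : a ≠ 0) (p : ℝ[X]) (x : ℝ) :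
    rootCountGE (a • p) x = rootCountGE p x := by
  rw [rootCountGE, roots_smul_nonzero p ha]; rfl

theorem eventually_atBot_rootCountGE (p : ℝ[X]) :
    ∀ᶠ x in atBot, rootCountGE p x = Multiset.card p.roots := by
  obtain ⟨b, hb⟩ := p.roots.toFinset.bddBelow
  filter_upwards [eventually_le_atBot b] with x hx
  exact Multiset.countP_eq_card.mpr fun r hr => hx.trans (hb (by simpa using hr))

theorem realRooted_mul_iff {p q : ℝ[X]} (hp : p ≠ 0) (hq : q ≠ 0) :
    RealRooted (p * q) ↔ RealRooted p ∧ RealRooted q := by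
  have := p.card_roots'
  have := q.card_roots'
  simp only [RealRooted, roots_mul (mul_ne_zero hp hq), Multiset.card_add, natDegree_mul hp hq]
  omega

theorem RealRooted.smul {p : ℝ[X]} (hp : RealRooted p) {a : ℝ} (ha : a ≠ 0) :
    RealRooted (a • p) := by
  rwa [RealRooted, roots_smul_nonzero p ha, smul_eq_C_mul, natDegree_C_mul ha]

theorem leadingCoeff_smul_pos {p : ℝ[X]} (hp : 0 < p.leadingCoeff) {a : ℝ} (ha : 0 < a) :
    0 < (a • p).leadingCoeff := by
  rw [smul_eq_C_mul, leadingCoeff_mul, leadingCoeff_C]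
  exact mul_pos ha hp

def CountInterlaces (g f : ℝ[X]) : Prop :=
  RealRooted f ∧ RealRooted g ∧ 0 < f.leadingCoeff ∧ 0 < g.leadingCoeff ∧
    ∀ x, rootCountGE g x ≤ rootCountGE f x ∧ rootCountGE f x ≤ rootCountGE g x + 1

namespace CountInterlaces

variable {g f : ℝ[X]}

theorem natDegree_le (h : CountInterlaces g f) :
    g.natDegree ≤ f.natDegree ∧ f.natDegree ≤ g.natDegree + 1 := by
  obtain ⟨hfr, hgr, -, -, hcnt⟩ := h
  obtain ⟨x, hfx, hgx⟩ :=
    ((eventually_atBot_rootCountGE f).and (eventually_atBot_rootCountGE g)).exists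
  have := hcnt x
  rwa [hfx, hgx, hfr, hgr] at this

theorem refl {p : ℝ[X]} (hp : RealRooted p) (hlc : 0 < p.leadingCoeff) :
    CountInterlaces p p :=
  ⟨hp, hp, hlc, hlc, fun _ => ⟨le_rfl, Nat.le_succ _⟩⟩

theorem smul (h : CountInterlaces g f) {s t : ℝ} (hs : 0 < s) (ht : 0 < t) :
    CountInterlaces (s • g) (t • f) := by
  obtain ⟨hfr, hgr, hlf, hlg, hcnt⟩ := h
  refine ⟨hfr.smul ht.ne', hgr.smul hs.ne', leadingCoeff_smul_pos hlf ht,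
    leadingCoeff_smul_pos hlg hs, fun x => ?_⟩
  rw [rootCountGE_smul hs.ne', rootCountGE_smul ht.ne']
  exact hcnt x

theorem mul_left_iff {h g f : ℝ[X]} (hh : RealRooted h) (hlc : 0 < h.leadingCoeff)
    (hg : g ≠ 0) (hf : f ≠ 0) : CountInterlaces (h * g) (h * f) ↔ CountInterlaces g f := by
  have h0 : h ≠ 0 := leadingCoeff_ne_zero.mp hlc.ne'
  simp only [CountInterlaces, realRooted_mul_iff h0 hg, realRooted_mul_iff h0 hf, hh,
    true_and, leadingCoeff_mul, mul_pos_iff_of_pos_left hlc, rootCountGE_mul h0 hg,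
    rootCountGE_mul h0 hf, add_le_add_iff_left, add_assoc]

theorem of_between (h : CountInterlaces g f) {p : ℝ[X]} (hp : RealRooted p)
    (hlc : 0 < p.leadingCoeff) (hgp : ∀ x, rootCountGE g x ≤ rootCountGE p x)
    (hpf : ∀ x, rootCountGE p x ≤ rootCountGE f x) :
    CountInterlaces g p ∧ CountInterlaces p f := by
  obtain ⟨hfr, hgr, hlf, hlg, hcnt⟩ := h
  refine ⟨⟨hp, hgr, hlc, hlg, fun x => ⟨hgp x, ?_⟩⟩, ⟨hfr, hp, hlf, hlc, fun x => ⟨hpf x, ?_⟩⟩⟩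
  · exact (hpf x).trans (hcnt x).2
  · exact (hcnt x).2.trans (Nat.add_le_add_right (hgp x) 1)

end CountInterlaces

theorem interlaces_iff_countInterlaces {g f : ℝ[X]} (hg : g ≠ 0) (hf : f ≠ 0) :
    Interlaces g f ↔ CountInterlaces g f := by
  simp only [Interlaces, hg, hf, false_or, CountInterlaces]
  refine and_congr_right fun hfr => and_congr_right fun hgr => and_congr_right fun hlf =>
    and_congr_right fun hlg => ?_
  have hU := pairwise_rootList f
  have hV := pairwise_rootList g
  have hUl := length_rootList hfr
  have hVl := length_rootList hgr
  simp only [rootCountGE_eq_countP_rootList, forall_and]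
  constructor
  · rintro (⟨hdeg, hlo, hhi⟩ | ⟨hdeg, hlo, hhi⟩)
    · exact ⟨(List.getD_le_getD_shift_iff hU hV (s := 0) (t := 0) (by omega)).mp
          fun j hj => hlo j (by omega),
        (List.getD_le_getD_shift_iff hV hU (s := 1) (t := 1) (by omega)).mp
          fun j hj => hhi j (by omega)⟩
    · exact ⟨(List.getD_le_getD_shift_iff hU hV (s := 1) (t := 0) (by omega)).mp
          fun j hj => hhi j (by omega),
        (List.getD_le_getD_shift_iff hV hU (s := 0) (t := 1) (by omega)).mp
          fun j hj => hlo j (by omega)⟩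
  · rintro ⟨hle, hle1⟩
    obtain ⟨hdeg, hdeg1⟩ : g.natDegree ≤ f.natDegree ∧ f.natDegree ≤ g.natDegree + 1 :=
      CountInterlaces.natDegree_le ⟨hfr, hgr, hlf, hlg, fun x => by
        simp only [rootCountGE_eq_countP_rootList]; exact ⟨hle x, hle1 x⟩⟩
    rcases hdeg.eq_or_lt with hdeg | hdeg
    · exact Or.inl ⟨hdeg.symm,
        fun j hj => (List.getD_le_getD_shift_iff hU hV (s := 0) (t := 0) (by omega)).mpr hle j
          (by omega),
        fun j hj => (List.getD_le_getD_shift_iff hV hU (s := 1) (t := 1) (by omega)).mpr hle1 j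
          (by omega)⟩
    · exact Or.inr ⟨by omega,
        fun j hj => (List.getD_le_getD_shift_iff hV hU (s := 0) (t := 1) (by omega)).mpr hle1 j
          (by omega),
        fun j hj => (List.getD_le_getD_shift_iff hU hV (s := 1) (t := 0) (by omega)).mpr hle j
          (by omega)⟩

theorem Multiset.neg_one_pow_countP_le_mul_prod_sub_pos (s : Multiset ℝ) {x : ℝ} (hx : x ∉ s) :
    0 < (-1 : ℝ) ^ s.countP (x ≤ ·) * (s.map (x - ·)).prod := by
  induction s using Multiset.induction_on with
  | empty => simp
  | cons r s ih =>
    rw [Multiset.mem_cons, not_or] at hx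
    have ih := ih hx.2
    rw [Multiset.countP_cons, Multiset.map_cons, Multiset.prod_cons]
    rcases lt_or_gt_of_ne hx.1 with hxr | hrx
    · simp only [hxr.le, if_true, pow_succ]
      nlinarith
    · simp only [not_le.mpr hrx, if_false, add_zero]
      nlinarith

theorem RealRooted.neg_one_pow_mul_eval_pos {p : ℝ[X]} (hp : RealRooted p)
    (hlc : 0 < p.leadingCoeff) {x : ℝ} (hx : x ∉ p.roots) :
    0 < (-1 : ℝ) ^ rootCountGE p x * p.eval x := by
  have heval : p.eval x = p.leadingCoeff * (p.roots.map (x - ·)).prod := by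
    conv_lhs => rw [← C_leadingCoeff_mul_prod_multiset_X_sub_C hp]
    simp [eval_multiset_prod]
  have := p.roots.neg_one_pow_countP_le_mul_prod_sub_pos hx
  rw [heval, rootCountGE]
  nlinarith

theorem exists_lt_neg_one_pow_natDegree_mul_eval_pos {p : ℝ[X]} (hlc : 0 < p.leadingCoeff)
    (B : ℝ) : ∃ x < B, 0 < (-1 : ℝ) ^ p.natDegree * p.eval x := by
  have hlead : ∀ᶠ x in atBot,
      0 < (-1 : ℝ) ^ p.natDegree * (p.leadingCoeff * x ^ p.natDegree) := by
    filter_upwards [eventually_lt_atBot 0] with x hx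
    rw [mul_left_comm, ← mul_pow]
    exact mul_pos hlc (pow_pos (by linarith) _)
  have hequiv := (Asymptotics.IsEquivalent.refl (u := fun _ => (-1 : ℝ) ^ p.natDegree)).mul
    p.isEquivalent_atBot_lead
  exact ((hequiv.eventually_pos hlead).and (eventually_lt_atBot B)).exists.imp
    fun x hx => ⟨hx.2, hx.1⟩

theorem exists_isRoot_mem_Ioo_of_eval_mul_neg {p : ℝ[X]} {a b : ℝ} (hab : a < b)
    (h : p.eval a * p.eval b < 0) : ∃ c ∈ Set.Ioo a b, p.IsRoot c := by
  rcases lt_or_gt_of_ne (left_ne_zero_of_mul h.ne) with ha | ha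
  · exact intermediate_value_Ioo hab.le p.continuousOn ⟨ha, by nlinarith⟩
  · exact intermediate_value_Ioo' hab.le p.continuousOn ⟨by nlinarith, ha⟩

theorem mul_neg_of_neg_one_pow_mul_pos {A B : ℝ} {k : ℕ} (hA : 0 < (-1 : ℝ) ^ (k + 1) * A)
    (hB : 0 < (-1 : ℝ) ^ k * B) : A * B < 0 := by
  have hk : (-1 : ℝ) ^ k * (-1) ^ k = 1 := by rw [← mul_pow]; norm_num
  rw [pow_succ] at hA
  nlinarith [mul_pos hA hB]

theorem exists_roots_mem_Ioo_of_sign_changes {p : ℝ[X]} (hp : p ≠ 0) {n : ℕ}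
    (hn : p.natDegree ≤ n) {l u : ℕ → ℝ} (hlu : ∀ i < n, l i < u i)
    (hul : ∀ i, i + 1 < n → u i ≤ l (i + 1))
    (hsign : ∀ i < n, p.eval (l i) * p.eval (u i) < 0) :
    ∃ W : List ℝ, p.roots = W ∧ W.length = n ∧ W.Pairwise (· ≤ ·) ∧
      ∀ i < n, l i < W.getD i 0 ∧ W.getD i 0 < u i := by
  have hex : ∀ i, ∃ w, i < n → w ∈ Set.Ioo (l i) (u i) ∧ p.IsRoot w := fun i => by
    by_cases hi : i < n
    · obtain ⟨w, hw⟩ := exists_isRoot_mem_Ioo_of_eval_mul_neg (hlu i hi) (hsign i hi)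
      exact ⟨w, fun _ => hw⟩
    · exact ⟨0, fun h => absurd h hi⟩
  choose w hw using hex
  set W := (List.range n).map w with hW
  have hget : ∀ i < n, W.getD i 0 = w i := fun i hi => by simp [hW, hi]
  have hlt : W.Pairwise (· < ·) := by
    rw [← List.isChain_iff_pairwise, List.isChain_map, List.isChain_range]
    intro i hi
    exact ((hw i (by omega)).1.2.trans_le (hul i (by omega))).trans (hw (i + 1) (by omega)).1.1
  have hsub : (W : Multiset ℝ) ≤ p.roots := by
    rw [Multiset.le_iff_subset (Multiset.coe_nodup.mpr (hlt.imp ne_of_lt))]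
    intro y hy
    obtain ⟨i, hi, rfl⟩ := List.mem_map.mp hy
    exact (mem_roots hp).mpr (hw i (List.mem_range.mp hi)).2
  have hcard : Multiset.card p.roots ≤ Multiset.card (W : Multiset ℝ) := by
    simpa [hW] using p.card_roots'.trans hn
  refine ⟨W, (Multiset.eq_of_le_of_card_le hsub hcard).symm, by simp [hW], hlt.imp le_of_lt,
    fun i hi => ?_⟩
  rw [hget i hi]
  exact (hw i hi).1

theorem natDegree_smul_add_smul_eq_and_leadingCoeff_pos {g f : ℝ[X]} (hlg : 0 < g.leadingCoeff)
    (hlf : 0 < f.leadingCoeff) (hdeg : g.natDegree ≤ f.natDegree) {α β : ℝ} (hα : 0 ≤ α)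
    (hβ : 0 < β) :
    (α • g + β • f).natDegree = f.natDegree ∧ 0 < (α • g + β • f).leadingCoeff := by
  have hg : 0 ≤ g.coeff f.natDegree := by
    rcases hdeg.eq_or_lt with h | h
    · exact h ▸ hlg.le
    · rw [coeff_eq_zero_of_natDegree_lt h]
  have hcoeff : 0 < (α • g + β • f).coeff f.natDegree := by
    rw [coeff_add, coeff_smul, coeff_smul, smul_eq_mul, smul_eq_mul]
    exact add_pos_of_nonneg_of_pos (mul_nonneg hα hg) (mul_pos hβ hlf)
  have hle : (α • g + β • f).natDegree ≤ f.natDegree :=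
    natDegree_add_le_of_degree_le ((natDegree_smul_le _ _).trans hdeg) (natDegree_smul_le _ _)
  have hdeg' := hle.antisymm (le_natDegree_of_ne_zero hcoeff.ne')
  exact ⟨hdeg', by rwa [leadingCoeff, hdeg']⟩

theorem Polynomial.notMem_roots_of_isUnit_gcd {K : Type*} [Field K] [DecidableEq K]
    {p q : K[X]} (h : IsUnit (gcd p q)) {r : K} (hp : r ∈ p.roots) : r ∉ q.roots := fun hq =>
  not_isUnit_X_sub_C r <| isUnit_of_dvd_unit
    (dvd_gcd (dvd_iff_isRoot.mpr (isRoot_of_mem_roots hp))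
      (dvd_iff_isRoot.mpr (isRoot_of_mem_roots hq))) h

namespace CountInterlaces

variable {g f : ℝ[X]}

theorem getD_rootList_lt_of_disjoint (h : CountInterlaces g f)
    (hdisj : ∀ r ∈ f.roots, r ∉ g.roots) {e : ℕ} (he : f.natDegree = g.natDegree + e) :
    (∀ j < g.natDegree, (rootList g).getD j 0 < (rootList f).getD (j + e) 0) ∧
      ∀ i, i + 1 < f.natDegree → (rootList f).getD i 0 < (rootList g).getD (i + (1 - e)) 0 := by
  have he1 := h.natDegree_le.2
  obtain ⟨hfr, hgr, -, -, hcnt⟩ := h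
  have hU := length_rootList hfr
  have hV := length_rootList hgr
  simp only [rootCountGE_eq_countP_rootList] at hcnt
  have hVU := (List.getD_le_getD_shift_iff (pairwise_rootList f) (pairwise_rootList g)
    (d := 0) (s := e) (t := 0) (by omega)).mpr fun x => (hcnt x).1
  have hUV := (List.getD_le_getD_shift_iff (pairwise_rootList g) (pairwise_rootList f)
    (d := 0) (s := 1 - e) (t := 1) (by omega)).mpr fun x => (hcnt x).2
  constructor
  · intro j hj
    refine (hVU j (by omega)).lt_of_ne fun heq => hdisj _
      (getD_rootList_mem_roots (i := j + e) (by omega) 0) ?_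
    rw [← heq]
    exact getD_rootList_mem_roots (by omega) 0
  · intro i hi
    refine (hUV i (by omega)).lt_of_ne fun heq => hdisj _
      (getD_rootList_mem_roots (i := i) (by omega) 0) ?_
    rw [heq]
    exact getD_rootList_mem_roots (by omega) 0

theorem rootCountGE_getD_rootList (h : CountInterlaces g f)
    (hdisj : ∀ r ∈ f.roots, r ∉ g.roots) {e : ℕ} (he : f.natDegree = g.natDegree + e) :
    (∀ i < f.natDegree, rootCountGE g ((rootList f).getD i 0) = f.natDegree - 1 - i) ∧
      ∀ j < g.natDegree, rootCountGE f ((rootList g).getD j 0) = f.natDegree - (j + e) := by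
  have he1 := h.natDegree_le.2
  obtain ⟨hVU, hUV⟩ := h.getD_rootList_lt_of_disjoint hdisj he
  obtain ⟨hfr, hgr, -, -, -⟩ := h
  have hU := length_rootList hfr
  have hV := length_rootList hgr
  constructor
  · intro i hi
    have hj : i + 1 - e ≤ (rootList g).length := by omega
    rw [rootCountGE_eq_countP_rootList,
      List.countP_le_eq_length_sub (pairwise_rootList g) (d := 0) hj]
    · omega
    · intro hpos
      have hlt := hVU (i - e) (by omega)
      rwa [show i - e + e = i by omega, ← show i + 1 - e - 1 = i - e by omega] at hlt
    · intro _
      have hlt := hUV i (by omega)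
      rw [show i + (1 - e) = i + 1 - e by omega] at hlt
      exact hlt.le
  · intro j hj
    have hj' : j + e ≤ (rootList f).length := by omega
    rw [rootCountGE_eq_countP_rootList,
      List.countP_le_eq_length_sub (pairwise_rootList f) (d := 0) hj']
    · omega
    · intro hpos
      have hlt := hUV (j + e - 1) (by omega)
      rwa [show j + e - 1 + (1 - e) = j by omega] at hlt
    · intro _
      exact (hVU j hj).le

theorem neg_one_pow_mul_eval_combination_pos (h : CountInterlaces g f)
    (hdisj : ∀ r ∈ f.roots, r ∉ g.roots) {e : ℕ} (he : f.natDegree = g.natDegree + e)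
    {α β : ℝ} (hα : 0 < α) (hβ : 0 < β) :
    (∀ i < f.natDegree,
      0 < (-1 : ℝ) ^ (f.natDegree - 1 - i) * (α • g + β • f).eval ((rootList f).getD i 0)) ∧
    ∀ j < g.natDegree,
      0 < (-1 : ℝ) ^ (f.natDegree - (j + e)) * (α • g + β • f).eval ((rootList g).getD j 0) := by
  obtain ⟨hcntU, hcntV⟩ := h.rootCountGE_getD_rootList hdisj he
  obtain ⟨hfr, hgr, hlf, hlg, -⟩ := h
  have hU := length_rootList hfr
  have hV := length_rootList hgr
  constructor
  · intro i hi
    have hmem : (rootList f).getD i 0 ∈ f.roots := getD_rootList_mem_roots (by omega) 0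
    have hg := hgr.neg_one_pow_mul_eval_pos hlg (hdisj _ hmem)
    rw [hcntU i hi] at hg
    simp only [eval_add, eval_smul, smul_eq_mul, (isRoot_of_mem_roots hmem).eq_zero,
      mul_zero, add_zero, mul_left_comm _ α]
    exact mul_pos hα hg
  · intro j hj
    have hmem : (rootList g).getD j 0 ∈ g.roots := getD_rootList_mem_roots (by omega) 0
    have hf := hfr.neg_one_pow_mul_eval_pos hlf fun h => hdisj _ h hmem
    rw [hcntV j hj] at hf
    simp only [eval_add, eval_smul, smul_eq_mul, (isRoot_of_mem_roots hmem).eq_zero,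
      mul_zero, zero_add, mul_left_comm _ β]
    exact mul_pos hβ hf

theorem exists_roots_combination_between (h : CountInterlaces g f)
    (hdisj : ∀ r ∈ f.roots, r ∉ g.roots) {e : ℕ} (he : f.natDegree = g.natDegree + e)
    {α β : ℝ} (hα : 0 < α) (hβ : 0 < β) :
    ∃ W : List ℝ, (α • g + β • f).roots = W ∧ W.length = f.natDegree ∧ W.Pairwise (· ≤ ·) ∧
      (∀ j < g.natDegree, (rootList g).getD j 0 ≤ W.getD (j + e) 0) ∧
      ∀ i < f.natDegree, W.getD i 0 ≤ (rootList f).getD i 0 := by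
  obtain ⟨hdeg, hdeg1⟩ := h.natDegree_le
  obtain ⟨hVU, hUV⟩ := h.getD_rootList_lt_of_disjoint hdisj he
  obtain ⟨hsignU, hsignV⟩ := h.neg_one_pow_mul_eval_combination_pos hdisj he hα hβ
  obtain ⟨-, hgr, hlf, hlg, -⟩ := h
  obtain ⟨hpdeg, hplc⟩ :=
    natDegree_smul_add_smul_eq_and_leadingCoeff_pos hlg hlf hdeg hα.le hβ
  set p := α • g + β • f
  have hV := length_rootList hgr
  obtain ⟨x₀, hx₀, hsign₀⟩ :=
    exists_lt_neg_one_pow_natDegree_mul_eval_pos hplc ((rootList f).getD 0 0)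
  rw [hpdeg] at hsign₀
  -- `p` has sign `(-1) ^ (deg f - i)` at `l i`; for `i < e` (i.e. `i = 0` and
  -- `deg f = deg g + 1`) no root of `g` lies below the `i`-th root of `f`, so `l i` is far left
  set l : ℕ → ℝ := fun i => if i < e then x₀ else (rootList g).getD (i - e) 0 with hl
  have hlV : ∀ j, l (j + e) = (rootList g).getD j 0 := fun j => by simp [hl]
  have hlU : ∀ i < f.natDegree,
      0 < (-1 : ℝ) ^ (f.natDegree - i) * p.eval (l i) ∧ l i < (rootList f).getD i 0 := by
    intro i hi
    by_cases hie : i < e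
    · obtain rfl : i = 0 := by omega
      simpa [hl, hie] using ⟨hsign₀, hx₀⟩
    · obtain ⟨j, rfl⟩ : ∃ j, i = j + e := ⟨i - e, by omega⟩
      rw [hlV]
      exact ⟨hsignV j (by omega), hVU j (by omega)⟩
  obtain ⟨W, hroots, hWlen, hWs, hW⟩ := exists_roots_mem_Ioo_of_sign_changes
    (leadingCoeff_ne_zero.mp hplc.ne') hpdeg.le (fun i hi => (hlU i hi).2)
    (fun i hi => by
      rw [show i + 1 = i + (1 - e) + e by omega, hlV]
      exact (hUV i hi).le)
    (fun i hi => by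
      refine mul_neg_of_neg_one_pow_mul_pos (k := f.natDegree - 1 - i) ?_ (hsignU i hi)
      rw [show f.natDegree - 1 - i + 1 = f.natDegree - i by omega]
      exact (hlU i hi).1)
  refine ⟨W, hroots, hWlen, hWs, fun j hj => ?_, fun i hi => (hW i hi).2.le⟩
  rw [← hlV]
  exact (hW (j + e) (by omega)).1.le

theorem combination_of_disjoint (h : CountInterlaces g f)
    (hdisj : ∀ r ∈ f.roots, r ∉ g.roots) {α β : ℝ} (hα : 0 < α) (hβ : 0 < β) :
    CountInterlaces g (α • g + β • f) ∧ CountInterlaces (α • g + β • f) f := by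
  obtain ⟨e, he⟩ : ∃ e, f.natDegree = g.natDegree + e :=
    ⟨_, (Nat.add_sub_of_le h.natDegree_le.1).symm⟩
  obtain ⟨W, hroots, hWlen, hWs, hVW, hWU⟩ := h.exists_roots_combination_between hdisj he hα hβ
  have ⟨hfr, hgr, hlf, hlg, _⟩ := h
  obtain ⟨hpdeg, hplc⟩ :=
    natDegree_smul_add_smul_eq_and_leadingCoeff_pos hlg hlf h.natDegree_le.1 hα.le hβ
  have hU := length_rootList hfr
  have hV := length_rootList hgr
  have hcnt : ∀ x, rootCountGE (α • g + β • f) x = W.countP (x ≤ ·) := fun x => by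
    rw [rootCountGE, hroots, Multiset.coe_countP]
  refine h.of_between (by rw [RealRooted, hroots, Multiset.coe_card, hWlen, hpdeg]) hplc
    (fun x => ?_) (fun x => ?_) <;> rw [hcnt, rootCountGE_eq_countP_rootList]
  · exact (List.getD_le_getD_shift_iff hWs (pairwise_rootList g) (d := 0) (s := e) (t := 0)
      (by omega)).mp (fun j hj => hVW j (by omega)) x
  · exact (List.getD_le_getD_shift_iff (pairwise_rootList f) hWs (d := 0) (s := 0) (t := 0)
      (by omega)).mp (fun j hj => hWU j (by omega)) x

theorem combination (h : CountInterlaces g f) {α β : ℝ} (hα : 0 ≤ α) (hβ : 0 ≤ β)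
    (hne : α • g + β • f ≠ 0) :
    CountInterlaces g (α • g + β • f) ∧ CountInterlaces (α • g + β • f) f := by
  have ⟨hfr, hgr, hlf, hlg, hcnt⟩ := h
  rcases hα.eq_or_lt with rfl | hα
  · have hβ' : 0 < β := hβ.lt_of_ne (by rintro rfl; simp at hne)
    rw [zero_smul, zero_add]
    refine h.of_between (hfr.smul hβ'.ne') (leadingCoeff_smul_pos hlf hβ') (fun x => ?_)
      (fun x => (rootCountGE_smul hβ'.ne' f x).le)
    rw [rootCountGE_smul hβ'.ne']
    exact (hcnt x).1
  rcases hβ.eq_or_lt with rfl | hβ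
  · rw [zero_smul, add_zero]
    refine h.of_between (hgr.smul hα.ne') (leadingCoeff_smul_pos hlg hα)
      (fun x => (rootCountGE_smul hα.ne' g x).ge) (fun x => ?_)
    rw [rootCountGE_smul hα.ne']
    exact (hcnt x).1
  classical
  have hf0 : f ≠ 0 := leadingCoeff_ne_zero.mp hlf.ne'
  obtain ⟨f₁, g₁, hf₁, hg₁, hunit⟩ := extract_gcd f g
  have hd0 : gcd f g ≠ 0 := gcd_ne_zero_of_left hf0
  have hdlc : 0 < (gcd f g).leadingCoeff := by
    rw [← _root_.normalize_gcd, (monic_normalize hd0).leadingCoeff]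
    exact one_pos
  set d := gcd f g
  have hf₁0 : f₁ ≠ 0 := right_ne_zero_of_mul (hf₁ ▸ hf0)
  have hg₁0 : g₁ ≠ 0 := right_ne_zero_of_mul (hg₁ ▸ leadingCoeff_ne_zero.mp hlg.ne')
  have hdr : RealRooted d := ((realRooted_mul_iff hd0 hf₁0).mp (hf₁ ▸ hfr)).1
  have hcomb : α • g + β • f = d * (α • g₁ + β • f₁) := by
    rw [hf₁, hg₁, mul_add, mul_smul_comm, mul_smul_comm]
  have hp₁ : α • g₁ + β • f₁ ≠ 0 := right_ne_zero_of_mul (hcomb ▸ hne)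
  suffices CountInterlaces (d * g₁) (d * (α • g₁ + β • f₁)) ∧
      CountInterlaces (d * (α • g₁ + β • f₁)) (d * f₁) by
    rwa [← hf₁, ← hg₁, ← hcomb] at this
  rw [mul_left_iff hdr hdlc hg₁0 hp₁, mul_left_iff hdr hdlc hp₁ hf₁0]
  rw [hf₁, hg₁, mul_left_iff hdr hdlc hg₁0 hf₁0] at h
  exact h.combination_of_disjoint (fun _ => notMem_roots_of_isUnit_gcd hunit) hα hβ

end CountInterlaces

theorem interlaces_smul_smul {p : ℝ[X]} (hp : RealRooted p) (hpnn : NonnegCoeffs p) {s t : ℝ}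
    (hs : 0 ≤ s) (ht : 0 ≤ t) (hsp : s • p ≠ 0) (htp : t • p ≠ 0) :
    Interlaces (s • p) (t • p) := by
  have hlc : 0 < p.leadingCoeff :=
    (hpnn _).lt_of_ne' (leadingCoeff_ne_zero.mpr (right_ne_zero_of_smul hsp))
  exact (interlaces_iff_countInterlaces hsp htp).mpr <| (CountInterlaces.refl hp hlc).smul
    (hs.lt_of_ne' (left_ne_zero_of_smul hsp)) (ht.lt_of_ne' (left_ne_zero_of_smul htp))

/-- if `a, b, c, d ≥ 0` with `ad ≥ bc` and `g ≼ f` for real-rooted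
polynomials `f, g` with nonnegative coefficients, then `a·g + b·f ≼ c·g + d·f`
provided both are nonzero. -/
theorem stmt4 (a b c d : ℝ) (ha : 0 ≤ a) (hb : 0 ≤ b) (hc : 0 ≤ c) (hd : 0 ≤ d)
    (hdet : b * c ≤ a * d) (f g : Polynomial ℝ)
    (hfrr : RealRooted f) (hgrr : RealRooted g)
    (hfnn : NonnegCoeffs f) (hgnn : NonnegCoeffs g)
    (hint : Interlaces g f)
    (h1 : a • g + b • f ≠ 0) (h2 : c • g + d • f ≠ 0) :
    Interlaces (a • g + b • f) (c • g + d • f) := by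
  by_cases hf0 : f = 0
  · subst hf0
    simp only [smul_zero, add_zero] at h1 h2 ⊢
    exact interlaces_smul_smul hgrr hgnn ha hc h1 h2
  by_cases hg0 : g = 0
  · subst hg0
    simp only [smul_zero, zero_add] at h1 h2 ⊢
    exact interlaces_smul_smul hfrr hfnn hb hd h1 h2
  have hgf := (interlaces_iff_countInterlaces hg0 hf0).mp hint
  rcases ha.eq_or_lt with rfl | ha
  · have hb0 : b ≠ 0 := by rintro rfl; simp at h1
    obtain rfl : c = 0 :=
      (mul_eq_zero.mp (le_antisymm (by simpa using hdet) (mul_nonneg hb hc))).resolve_left hb0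
    simp only [zero_smul, zero_add] at h1 h2 ⊢
    exact interlaces_smul_smul hfrr hfnn hb hd h1 h2
  have hq : c • g + d • f = (c / a) • (a • g + b • f) + ((a * d - b * c) / a) • f := by
    rw [smul_add, smul_smul, smul_smul, add_assoc, ← add_smul]
    congr 2
    · field_simp
    · field_simp
      ring
  rw [hq] at h2 ⊢
  refine (interlaces_iff_countInterlaces h1 h2).mpr ?_
  exact ((hgf.combination ha.le hb h1).2.combination (div_nonneg hc ha.le)
    (div_nonneg (by linarith) ha.le) h2).1
end

section
/- For n ≥ 1, the polynomial E_2((x)^n) arising from r = 2 is: x^{n/2} if n is even and 0 otherwise; more interestingly, for r = 3 and any n ≥ 1, the polynomial E_3((x + x^2)^n) = Σ_{k} C(n, 3k - n)·x^k has only real roots. -/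
/-!
For `p = E₃((x + x²)ⁿ)` the roots-of-unity filter with `ω = e^{2πi/3}` gives, for real `t`,
`3 p(-t³) = (t² - t)ⁿ + w̄ⁿ + wⁿ = (-2 Re w)ⁿ + 2 Re wⁿ` where `w = ω t² - ω² t`.
As `t` runs over `(0, ∞)`, `w = ρ e^{iψ}` with `ρ > 0` and `ψ` increasing through `(π/3, 2π/3)`,
where `|2 cos ψ| < 1`; hence `p(-t³)` has the sign of `cos (nψ)` as soon as `|cos (nψ)| ≥ 1/2`.
Taking `nψ` within `π/3` of `jπ` for `⌈n/3⌉ ≤ j ≤ ⌊2n/3⌋` yields `⌊2n/3⌋ - ⌈n/3⌉` sign changes on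
the negative axis, so as many negative roots. Together with the root `0` of multiplicity
`⌈n/3⌉` these are `⌊2n/3⌋ ≥ deg p` real roots.
-/

open Polynomial Finset

open Real

namespace Polynomial

variable {R : Type*} [CommSemiring R] {r : ℕ}

theorem contract_monomial (hr : r ≠ 0) (i : ℕ) (a : R) :
    contract r (monomial i a) = if r ∣ i then monomial (i / r) a else 0 := by
  ext k
  rw [coeff_contract hr, coeff_monomial]
  by_cases hi : r ∣ i
  · obtain ⟨c, rfl⟩ := hi
    rw [if_pos (dvd_mul_right r c), coeff_monomial,
      Nat.mul_div_cancel_left c (Nat.pos_of_ne_zero hr)]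
    simp_rw [mul_comm r, Nat.mul_right_cancel_iff (Nat.pos_of_ne_zero hr)]
  · rw [if_neg hi, coeff_zero, if_neg]
    rintro rfl
    exact hi (dvd_mul_left r k)

theorem contract_X_pow (hr : r ≠ 0) (n : ℕ) :
    contract r (X ^ n : R[X]) = if r ∣ n then X ^ (n / r) else 0 := by
  rw [← monomial_one_right_eq_X_pow, contract_monomial hr, monomial_one_right_eq_X_pow]

theorem contract_eq_sum (r : ℕ) (f : R[X]) :
    contract r f = ∑ k ∈ range (f.natDegree + 1), C (f.coeff (r * k)) * X ^ k := by
  simp only [contract, C_mul_X_pow_eq_monomial, mul_comm r]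

end Polynomial

theorem Polynomial.add_card_le_card_roots {R : Type*} [CommRing R] [IsDomain R] {p : R[X]}
    (hp : p ≠ 0) {k : ℕ} (hk : X ^ k ∣ p) {S : Finset R} (hS0 : (0 : R) ∉ S)
    (hS : ∀ a ∈ S, p.IsRoot a) : k + S.card ≤ p.roots.card := by
  obtain ⟨q, rfl⟩ := hk
  have hq : q ≠ 0 := right_ne_zero_of_mul hp
  rw [roots_mul hp, roots_X_pow, Multiset.card_add, Multiset.card_nsmul, Multiset.card_singleton,
    mul_one, add_le_add_iff_left]
  refine Multiset.card_le_card ((Multiset.le_iff_subset S.nodup).2 fun a ha => ?_)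
  have ha0 : a ≠ 0 := fun h => hS0 (h ▸ ha)
  have := hS a ha
  rw [IsRoot, eval_mul, eval_pow, eval_X] at this
  exact (mem_roots hq).2 ((mul_eq_zero.1 this).resolve_left (pow_ne_zero _ ha0))

namespace IsPrimitiveRoot

variable {A : Type*} [CommRing A] [IsDomain A] {ζ : A} {r : ℕ}

theorem geom_sum_pow_eq (hζ : IsPrimitiveRoot ζ r) (i : ℕ) :
    ∑ j ∈ range r, (ζ ^ i) ^ j = if r ∣ i then (r : A) else 0 := by
  split_ifs with h
  · simp [(hζ.pow_eq_one_iff_dvd i).2 h]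
  · have hne : ζ ^ i ≠ 1 := fun h1 => h ((hζ.pow_eq_one_iff_dvd i).1 h1)
    refine eq_zero_of_ne_zero_of_mul_left_eq_zero (sub_ne_zero_of_ne hne.symm) ?_
    rw [mul_neg_geom_sum, ← pow_mul, mul_comm, pow_mul, hζ.pow_eq_one, one_pow, sub_self]

theorem sum_aeval_pow_mul {R : Type*} [CommSemiring R] [Algebra R A] (hζ : IsPrimitiveRoot ζ r)
    (f : R[X]) (x : A) :
    ∑ j ∈ range r, aeval (ζ ^ j * x) f = r * aeval (x ^ r) (contract r f) := by
  rcases eq_or_ne r 0 with rfl | hr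
  · simp
  induction f using Polynomial.induction_on' with
  | add p q hp hq => simp only [map_add, sum_add_distrib, contract_add hr, hp, hq, mul_add]
  | monomial i a =>
    calc ∑ j ∈ range r, aeval (ζ ^ j * x) (monomial i a)
        = algebraMap R A a * x ^ i * ∑ j ∈ range r, (ζ ^ i) ^ j := by
          simp only [aeval_monomial, mul_sum, mul_pow, ← pow_mul, mul_comm i]
          refine sum_congr rfl fun j _ => by ring
      _ = r * aeval (x ^ r) (contract r (monomial i a)) := by
          rw [hζ.geom_sum_pow_eq, contract_monomial hr]
          split_ifs with h
          · rw [aeval_monomial, ← pow_mul, Nat.mul_div_cancel' h]; ring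
          · simp

end IsPrimitiveRoot

theorem exists_mem_Ioo_eq_zero_of_mul_neg {f : ℝ → ℝ} {a b : ℝ} (hab : a ≤ b)
    (hf : ContinuousOn f (Set.Icc a b)) (h : f a * f b < 0) : ∃ x ∈ Set.Ioo a b, f x = 0 := by
  rcases mul_neg_iff.1 h with ⟨ha, hb⟩ | ⟨ha, hb⟩
  · exact intermediate_value_Ioo' hab hf ⟨hb, ha⟩
  · exact intermediate_value_Ioo hab hf ⟨ha, hb⟩

theorem exists_finset_zeros_of_sign_changes {f : ℝ → ℝ} (hf : Continuous f) {y : ℕ → ℝ} {m : ℕ}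
    (hy : ∀ i < m, y (i + 1) < y i) (hsign : ∀ i < m, f (y i) * f (y (i + 1)) < 0) :
    ∃ S : Finset ℝ, S.card = m ∧ ∀ x ∈ S, f x = 0 ∧ x ∈ Set.Ioo (y m) (y 0) := by
  induction m with
  | zero => exact ⟨∅, rfl, by simp⟩
  | succ m ih =>
    obtain ⟨S, hcard, hS⟩ := ih (fun i hi => hy i (by omega)) (fun i hi => hsign i (by omega))
    have hm0 : y m ≤ y 0 :=
      (strictAntiOn_Iic_of_succ_lt (fun i hi => hy i (by omega))).antitoneOn
        (Set.mem_Iic.2 (Nat.zero_le m)) Set.self_mem_Iic (Nat.zero_le m)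
    obtain ⟨x, hx, hfx⟩ := exists_mem_Ioo_eq_zero_of_mul_neg (hy m (by omega)).le
      hf.continuousOn (by rw [mul_comm]; exact hsign m (by omega))
    have hxS : x ∉ S := fun h => (hS x h).2.1.not_gt hx.2
    refine ⟨insert x S, by rw [card_insert_of_notMem hxS, hcard], ?_⟩
    rintro z hz
    rcases mem_insert.1 hz with rfl | hz
    · exact ⟨hfx, hx.1, hx.2.trans_le hm0⟩
    · exact ⟨(hS z hz).1, (hy m (by omega)).trans (hS z hz).2.1, (hS z hz).2.2⟩

theorem mul_neg_of_neg_one_pow_mul_pos_s8 {α : Type*} [Ring α] [LinearOrder α] [IsStrictOrderedRing α]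
    {a : ℕ} {x y : α} (hx : 0 < (-1) ^ a * x) (hy : 0 < (-1) ^ (a + 1) * y) : x * y < 0 := by
  rw [pow_succ] at hy
  rcases neg_one_pow_eq_or α a with h | h <;>
    simp only [h, one_mul, neg_one_mul, mul_neg, mul_one, neg_neg, neg_pos] at hx hy
  exacts [mul_neg_of_pos_of_neg hx hy, mul_neg_of_neg_of_pos hx hy]

theorem half_le_neg_one_pow_mul_cos {J j : ℕ} (h₁ : J ≤ 3 * j + 1) (h₂ : 3 * j ≤ J + 1) :
    1 / 2 ≤ (-1) ^ j * cos (J * π / 3) := by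
  have h₁' : (J : ℝ) ≤ 3 * j + 1 := by exact_mod_cast h₁
  have h₂' : (3 * j : ℝ) ≤ J + 1 := by exact_mod_cast h₂
  have hδ : |((J : ℝ) - 3 * j) * π / 3| ≤ π / 3 :=
    abs_le.2 ⟨by nlinarith [pi_pos], by nlinarith [pi_pos]⟩
  have hcos : cos (J * π / 3) = (-1) ^ j * cos (((J : ℝ) - 3 * j) * π / 3) := by
    rw [← cos_add_nat_mul_pi]; congr 1; ring
  rw [hcos, ← mul_assoc, ← pow_add, ← two_mul, pow_mul, neg_one_sq, one_pow, one_mul, ← cos_abs,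
    ← cos_pi_div_three]
  exact cos_le_cos_of_nonneg_of_le_pi (abs_nonneg _) (by linarith [pi_pos]) hδ

theorem abs_two_mul_cos_lt_one {ψ : ℝ} (hψ : ψ ∈ Set.Ioo (π / 3) (2 * π / 3)) :
    |2 * cos ψ| < 1 := by
  obtain ⟨h₁, h₂⟩ := hψ
  have hlo : cos (2 * π / 3) < cos ψ :=
    cos_lt_cos_of_nonneg_of_le_pi (by linarith [pi_pos]) (by linarith [pi_pos]) h₂
  have hhi : cos ψ < cos (π / 3) :=
    cos_lt_cos_of_nonneg_of_le_pi (by positivity) (by linarith [pi_pos]) h₁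
  rw [show 2 * π / 3 = π - π / 3 by ring, cos_pi_sub, cos_pi_div_three] at hlo
  rw [cos_pi_div_three] at hhi
  rw [abs_lt]
  constructor <;> linarith

theorem sin_add_pi_div_three_pos {ψ : ℝ} (hψ : ψ ∈ Set.Ioo (π / 3) (2 * π / 3)) :
    0 < sin (ψ + π / 3) :=
  sin_pos_of_pos_of_lt_pi (by linarith [hψ.1, pi_pos]) (by linarith [hψ.2])

noncomputable def cubeRootOfUnity : ℂ := Complex.exp (2 * π * Complex.I / 3)

local notation "ω" => cubeRootOfUnity

theorem isPrimitiveRoot_cubeRootOfUnity : IsPrimitiveRoot ω 3 := by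
  rw [cubeRootOfUnity]
  exact_mod_cast Complex.isPrimitiveRoot_exp 3 (by norm_num)

theorem cubeRootOfUnity_eq : ω = ⟨-1 / 2, √3 / 2⟩ := by
  have h : 2 * π * Complex.I / 3 = ((π - π / 3 : ℝ) : ℂ) * Complex.I := by push_cast; ring
  apply Complex.ext
  · rw [cubeRootOfUnity, h, Complex.exp_ofReal_mul_I_re, cos_pi_sub, cos_pi_div_three]; norm_num
  · rw [cubeRootOfUnity, h, Complex.exp_ofReal_mul_I_im, sin_pi_sub, sin_pi_div_three]

theorem re_cubeRootOfUnity : Complex.re ω = -1 / 2 := by rw [cubeRootOfUnity_eq]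

theorem im_cubeRootOfUnity : Complex.im ω = √3 / 2 := by rw [cubeRootOfUnity_eq]

theorem conj_cubeRootOfUnity : (starRingEnd ℂ) ω = ω ^ 2 := by
  have h3 : √3 * √3 = 3 := Real.mul_self_sqrt (by norm_num)
  rw [cubeRootOfUnity_eq]
  apply Complex.ext <;> simp [pow_two] <;> nlinarith

-- `sinRatio ψ` is the `t > 0` with `arg (ω t² - ω² t) = ψ` (law of sines).
noncomputable def sinRatio (ψ : ℝ) : ℝ := sin (ψ - π / 3) / sin (ψ + π / 3)

theorem sinRatio_pos {ψ : ℝ} (hψ : ψ ∈ Set.Ioo (π / 3) (2 * π / 3)) : 0 < sinRatio ψ :=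
  div_pos (sin_pos_of_pos_of_lt_pi (by linarith [hψ.1]) (by linarith [hψ.2, pi_pos]))
    (sin_add_pi_div_three_pos hψ)

theorem sinRatio_strictMonoOn : StrictMonoOn sinRatio (Set.Ioo (π / 3) (2 * π / 3)) := by
  intro ψ₁ h₁ ψ₂ h₂ h
  rw [sinRatio, sinRatio,
    div_lt_div_iff₀ (sin_add_pi_div_three_pos h₁) (sin_add_pi_div_three_pos h₂)]
  have key : sin (ψ₂ - π / 3) * sin (ψ₁ + π / 3) - sin (ψ₁ - π / 3) * sin (ψ₂ + π / 3) =
      √3 / 2 * sin (ψ₂ - ψ₁) := by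
    simp only [sin_sub, sin_add, sin_pi_div_three, cos_pi_div_three]
    ring
  have : 0 < sin (ψ₂ - ψ₁) := sin_pos_of_pos_of_lt_pi (by linarith) (by linarith [h₁.1, h₂.2])
  nlinarith [Real.sqrt_pos.2 (show (0 : ℝ) < 3 by norm_num)]

theorem exists_pos_eq_polar_cubeRootOfUnity_sinRatio {ψ : ℝ}
    (hψ : ψ ∈ Set.Ioo (π / 3) (2 * π / 3)) :
    ∃ ρ : ℝ, 0 < ρ ∧
      ω * (sinRatio ψ : ℂ) ^ 2 - ω ^ 2 * sinRatio ψ = ρ * Complex.exp (ψ * Complex.I) := by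
  have hs := sin_add_pi_div_three_pos hψ
  have ht := sinRatio_pos hψ
  have hst : sin (ψ + π / 3) * sinRatio ψ = sin (ψ - π / 3) := mul_div_cancel₀ _ hs.ne'
  have hsub : sin (ψ + π / 3) - sin (ψ + π / 3) * sinRatio ψ = √3 * cos ψ := by
    rw [hst]; simp only [sin_add, sin_sub, sin_pi_div_three, cos_pi_div_three]; ring
  have hadd : sin (ψ + π / 3) + sin (ψ + π / 3) * sinRatio ψ = sin ψ := by
    rw [hst]; simp only [sin_add, sin_sub, cos_pi_div_three]; ring
  refine ⟨√3 * sinRatio ψ / (2 * sin (ψ + π / 3)), by positivity, ?_⟩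
  rw [← conj_cubeRootOfUnity, ← Complex.ofReal_pow]
  apply Complex.ext
  · rw [Complex.sub_re, Complex.re_mul_ofReal, Complex.re_mul_ofReal, Complex.conj_re,
      Complex.re_ofReal_mul, Complex.exp_ofReal_mul_I_re, re_cubeRootOfUnity]
    rw [eq_comm, div_mul_eq_mul_div, div_eq_iff (by positivity)]
    linear_combination -sinRatio ψ * hsub
  · rw [Complex.sub_im, Complex.im_mul_ofReal, Complex.im_mul_ofReal, Complex.conj_im,
      Complex.im_ofReal_mul, Complex.exp_ofReal_mul_I_im, im_cubeRootOfUnity]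
    rw [eq_comm, div_mul_eq_mul_div, div_eq_iff (by positivity)]
    linear_combination -√3 * sinRatio ψ * hadd

theorem neg_one_pow_mul_pos_of_polar {n j : ℕ} (hn : n ≠ 0) {ρ ψ : ℝ} (hρ : 0 < ρ)
    (hψ : |2 * cos ψ| < 1) (hj : 1 / 2 ≤ (-1) ^ j * cos (n * ψ)) :
    0 < (-1) ^ j * ((-2 * (ρ * Complex.exp (ψ * Complex.I)).re) ^ n +
      2 * ((ρ * Complex.exp (ψ * Complex.I)) ^ n).re) := by
  have hpow : (ρ * Complex.exp (ψ * Complex.I)) ^ n =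
      (ρ ^ n : ℝ) * Complex.exp ((n * ψ : ℝ) * Complex.I) := by
    rw [mul_pow, ← Complex.exp_nat_mul]; push_cast; ring_nf
  rw [hpow, Complex.re_ofReal_mul, Complex.re_ofReal_mul, Complex.exp_ofReal_mul_I_re,
    Complex.exp_ofReal_mul_I_re]
  have hsmall : |(-1) ^ j * (-2 * cos ψ) ^ n| < 1 := by
    rw [abs_mul, abs_neg_one_pow, one_mul, abs_pow, neg_mul, abs_neg]
    exact pow_lt_one₀ (abs_nonneg _) hψ hn
  have : 0 < (-1) ^ j * (-2 * cos ψ) ^ n + 2 * ((-1) ^ j * cos (n * ψ)) := by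
    linarith [neg_abs_le ((-1) ^ j * (-2 * cos ψ) ^ n)]
  calc (0 : ℝ) < ρ ^ n * ((-1) ^ j * (-2 * cos ψ) ^ n + 2 * ((-1) ^ j * cos (n * ψ))) := by
        positivity
    _ = _ := by ring

-- The paper's `E₃((x + x²)ⁿ)`; `E_r` is `Polynomial.contract r`.
noncomputable def E3 (n : ℕ) : ℝ[X] := contract 3 ((X + X ^ 2) ^ n)

theorem coeff_E3 (n k : ℕ) :
    (E3 n).coeff k = if n ≤ 3 * k then (n.choose (3 * k - n) : ℝ) else 0 := by
  have : (X + X ^ 2 : ℝ[X]) ^ n = X ^ n * (1 + X) ^ n := by rw [← mul_pow]; ring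
  rw [E3, coeff_contract three_ne_zero, this, coeff_X_pow_mul', coeff_one_add_X_pow, mul_comm k]

theorem coeff_E3_eq_zero {n k : ℕ} (h : 3 * k < n ∨ 2 * n < 3 * k) : (E3 n).coeff k = 0 := by
  rw [coeff_E3]
  split_ifs
  · rw [Nat.choose_eq_zero_of_lt (by omega), Nat.cast_zero]
  · rfl

theorem natDegree_E3_le (n : ℕ) : (E3 n).natDegree ≤ 2 * n / 3 :=
  natDegree_le_iff_coeff_eq_zero.2 fun _ hk => coeff_E3_eq_zero (by omega)

theorem X_pow_dvd_E3 (n : ℕ) : X ^ ((n + 2) / 3) ∣ E3 n :=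
  X_pow_dvd_iff.2 fun _ hd => coeff_E3_eq_zero (by omega)

theorem E3_ne_zero {n : ℕ} (hn : n ≠ 1) : E3 n ≠ 0 := by
  refine ne_of_apply_ne (coeff · ((n + 2) / 3)) ?_
  rw [coeff_E3, if_pos (by omega), coeff_zero, Nat.cast_ne_zero]
  exact (Nat.choose_pos (by omega)).ne'

theorem E3_eq_sum (n : ℕ) :
    E3 n = ∑ k ∈ range (n + 1),
      C (if n ≤ 3 * k then (n.choose (3 * k - n) : ℝ) else 0) * X ^ k := by
  rw [as_sum_range_C_mul_X_pow' (E3 n) (n := n + 1) ((natDegree_E3_le n).trans_lt (by omega))]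
  simp only [coeff_E3]

theorem three_mul_eval_E3 (n : ℕ) (t : ℝ) :
    3 * (E3 n).eval (-t ^ 3) =
      (-2 * (ω * t ^ 2 - ω ^ 2 * t).re) ^ n + 2 * ((ω * t ^ 2 - ω ^ 2 * t) ^ n).re := by
  set w : ℂ := ω * t ^ 2 - ω ^ 2 * t
  have h3 : ω ^ 3 = 1 := isPrimitiveRoot_cubeRootOfUnity.pow_eq_one
  have hre : (-2 * w.re : ℝ) = -t + t ^ 2 := by
    have : (ω ^ 2).re = -1 / 2 := by
      rw [← conj_cubeRootOfUnity, Complex.conj_re, re_cubeRootOfUnity]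
    rw [Complex.sub_re, ← Complex.ofReal_pow, Complex.re_mul_ofReal, Complex.re_mul_ofReal, this,
      re_cubeRootOfUnity]
    ring
  have hconj : (starRingEnd ℂ) w = ω * (-t) + (ω * (-t)) ^ 2 := by
    simp only [w, map_sub, map_mul, map_pow, Complex.conj_ofReal, conj_cubeRootOfUnity]
    linear_combination (-(t : ℂ) * ω) * h3
  have hw : w = ω ^ 2 * (-t) + (ω ^ 2 * (-t)) ^ 2 := by
    simp only [w]
    linear_combination (-(t : ℂ) ^ 2 * ω) * h3
  have filter := isPrimitiveRoot_cubeRootOfUnity.sum_aeval_pow_mul ((X + X ^ 2 : ℝ[X]) ^ n)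
    (algebraMap ℝ ℂ (-t))
  rw [← map_pow, aeval_algebraMap_apply_eq_algebraMap_eval, ← E3, Odd.neg_pow (by decide)] at filter
  simp only [sum_range_succ, sum_range_zero, zero_add, pow_zero, one_mul, pow_one, map_pow,
    map_add, aeval_X, Complex.coe_algebraMap, Complex.ofReal_neg, Nat.cast_ofNat, neg_sq, ← hconj,
    ← hw] at filter
  apply Complex.ofReal_injective
  have hre' : (-2 * w.re : ℂ) = -t + t ^ 2 := by exact_mod_cast hre
  push_cast
  rw [← filter, hre', add_assoc, ← map_pow, add_comm (starRingEnd ℂ _), Complex.add_conj]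
  push_cast
  ring

theorem neg_one_pow_mul_eval_E3_pos {n j : ℕ} (hn : n ≠ 0) {ψ : ℝ}
    (hψ : ψ ∈ Set.Ioo (π / 3) (2 * π / 3)) (hj : 1 / 2 ≤ (-1) ^ j * cos (n * ψ)) :
    0 < (-1) ^ j * (E3 n).eval (-sinRatio ψ ^ 3) := by
  obtain ⟨ρ, hρ, hw⟩ := exists_pos_eq_polar_cubeRootOfUnity_sinRatio hψ
  have := neg_one_pow_mul_pos_of_polar hn hρ (abs_two_mul_cos_lt_one hψ) hj
  rw [← hw, ← three_mul_eval_E3] at this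
  linarith

-- `3j` for `j = ⌈n/3⌉ + i`, pushed by one into the open interval `(n, 2n)` at the two ends when
-- `3 ∣ n`; staying within `1` of `3j` keeps `(-1)ʲ cos (J π / 3) ≥ 1/2`.
def sampleIndex (n i : ℕ) : ℕ := min (max (3 * ((n + 2) / 3 + i)) (n + 1)) (2 * n - 1)

noncomputable def sampleAngle (n i : ℕ) : ℝ := sampleIndex n i * π / (3 * n)

theorem sampleAngle_mem {n : ℕ} (hn : 2 ≤ n) (i : ℕ) :
    sampleAngle n i ∈ Set.Ioo (π / 3) (2 * π / 3) := by
  have h₁ : (n : ℝ) < sampleIndex n i := by exact_mod_cast (by unfold sampleIndex; omega)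
  have h₂ : (sampleIndex n i : ℝ) < 2 * n := by exact_mod_cast (by unfold sampleIndex; omega)
  have hn' : (0 : ℝ) < n := by positivity
  rw [sampleAngle, Set.mem_Ioo, lt_div_iff₀ (by positivity), div_lt_iff₀ (by positivity)]
  constructor <;> nlinarith [pi_pos]

theorem sampleAngle_lt {n i j : ℕ} (hn : 2 ≤ n) (hij : i < j) (hj : j ≤ 2 * n / 3 - (n + 2) / 3) :
    sampleAngle n i < sampleAngle n j := by
  have : (sampleIndex n i : ℝ) < sampleIndex n j := by exact_mod_cast (by unfold sampleIndex; omega)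
  unfold sampleAngle
  gcongr

theorem half_le_neg_one_pow_mul_cos_sampleAngle {n i : ℕ} (hn : 2 ≤ n)
    (hi : i ≤ 2 * n / 3 - (n + 2) / 3) :
    1 / 2 ≤ (-1) ^ ((n + 2) / 3 + i) * cos (n * sampleAngle n i) := by
  have : (n : ℝ) * sampleAngle n i = sampleIndex n i * π / 3 := by
    rw [sampleAngle]; field_simp
  rw [this]
  exact half_le_neg_one_pow_mul_cos (by unfold sampleIndex; omega) (by unfold sampleIndex; omega)

theorem le_card_roots_E3 {n : ℕ} (hn : 2 ≤ n) : 2 * n / 3 ≤ (E3 n).roots.card := by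
  set k := (n + 2) / 3
  set m := 2 * n / 3 - k
  set y : ℕ → ℝ := fun i => -sinRatio (sampleAngle n i) ^ 3
  have hsign : ∀ i ≤ m, 0 < (-1) ^ (k + i) * (E3 n).eval (y i) := fun i hi =>
    neg_one_pow_mul_eval_E3_pos (by omega) (sampleAngle_mem hn i)
      (half_le_neg_one_pow_mul_cos_sampleAngle hn hi)
  have hy : ∀ i < m, y (i + 1) < y i := fun i hi => by
    simp only [y, neg_lt_neg_iff]
    exact pow_lt_pow_left₀ (sinRatio_strictMonoOn (sampleAngle_mem hn i) (sampleAngle_mem hn _)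
      (sampleAngle_lt hn (lt_add_one i) hi)) (sinRatio_pos (sampleAngle_mem hn i)).le three_ne_zero
  have hchange : ∀ i < m, (E3 n).eval (y i) * (E3 n).eval (y (i + 1)) < 0 := fun i hi =>
    mul_neg_of_neg_one_pow_mul_pos_s8 (hsign i hi.le) (hsign (i + 1) hi)
  obtain ⟨S, hcard, hS⟩ := exists_finset_zeros_of_sign_changes (E3 n).continuous hy hchange
  have hy0 : y 0 < 0 := neg_neg_of_pos (pow_pos (sinRatio_pos (sampleAngle_mem hn 0)) 3)
  have := add_card_le_card_roots (E3_ne_zero (by omega)) (X_pow_dvd_E3 n)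
    (fun h => ((hS 0 h).2.2.trans hy0).false) fun a ha => (hS a ha).1
  omega

theorem realRooted_E3 (n : ℕ) : RealRooted (E3 n) := by
  refine le_antisymm (card_roots' _) ((natDegree_E3_le n).trans ?_)
  rcases lt_or_ge n 2 with hn | hn
  · exact (show 2 * n / 3 = 0 by omega) ▸ Nat.zero_le _
  · exact le_card_roots_E3 hn

theorem stmt8_general (n : ℕ) :
    (∑ k ∈ Finset.range (((X : Polynomial ℝ) ^ n).natDegree + 1),
        C (((X : Polynomial ℝ) ^ n).coeff (2 * k)) * X ^ k) =
      (if 2 ∣ n then (X : Polynomial ℝ) ^ (n / 2) else 0) ∧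
    RealRooted (∑ k ∈ Finset.range (n + 1),
      C (if n ≤ 3 * k then ((n.choose (3 * k - n) : ℝ)) else 0) * X ^ k) := by
  refine ⟨?_, E3_eq_sum n ▸ realRooted_E3 n⟩
  rw [← contract_eq_sum, contract_X_pow two_ne_zero]

/-- for `n ≥ 1`, `E₂(xⁿ)` equals `x^{n/2}` if `n` is even and `0`
otherwise; and for `r = 3`, the polynomial
`E₃((x + x²)ⁿ) = Σ_k C(n, 3k - n)·xᵏ` (binomial coefficient zero out of range)
has only real roots. -/
theorem stmt8 (n : ℕ) (hn : 1 ≤ n) :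
    (∑ k ∈ Finset.range (((X : Polynomial ℝ) ^ n).natDegree + 1),
        C (((X : Polynomial ℝ) ^ n).coeff (2 * k)) * X ^ k) =
      (if 2 ∣ n then (X : Polynomial ℝ) ^ (n / 2) else 0) ∧
    RealRooted (∑ k ∈ Finset.range (n + 1),
      C (if n ≤ 3 * k then ((n.choose (3 * k - n) : ℝ)) else 0) * X ^ k) :=
  stmt8_general n
end

section
/- For any n ≥ 1 and r ≥ 2, if (1 + x + ... + x^{r-2})^n = Σ_{j=0}^{r-1} x^j h_j(x^r), then E_r((x + x^2 + ... + x^{r-1})^n)(x) = x^{⌈n/r⌉} · h_{(r - n mod r) mod r}(x). -/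
open Polynomial Finset

/-- for `n ≥ 1`, `r ≥ 2`, if
`(1 + x + ⋯ + x^{r-2})^n = Σ_{j<r} x^j h_j(x^r)`, then
`E_r((x + ⋯ + x^{r-1})^n) = x^{⌈n/r⌉} · h_{(r - n % r) % r}(x)`. -/
theorem stmt13 (r n : ℕ) (hr : 2 ≤ r) (hn : 1 ≤ n) (h : Fin r → Polynomial ℝ)
    (hsec : (∑ i ∈ Finset.range (r - 1), (X : Polynomial ℝ) ^ i) ^ n =
      ∑ j : Fin r, X ^ (j : ℕ) * (h j).comp (X ^ r))
    (p : Polynomial ℝ)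
    (hp : p = (∑ i ∈ Finset.Ico 1 r, (X : Polynomial ℝ) ^ i) ^ n) :
    (∑ k ∈ Finset.range (p.natDegree + 1), C (p.coeff (r * k)) * X ^ k) =
      X ^ ((n + r - 1) / r) *
        h ⟨(r - n % r) % r, Nat.mod_lt _ (by omega)⟩ := by
  have hr0 : 0 < r := by omega
  set q : ℕ := (n + r - 1) / r with hq_def
  set j0 : ℕ := (r - n % r) % r with hj0_def
  have hj0lt : j0 < r := Nat.mod_lt _ hr0
  -- arithmetic: n + j0 = r * q
  have hq : n + j0 = r * q := by
    obtain ⟨d, s, hsr, hn_eq⟩ : ∃ d s, s < r ∧ n = r * d + s :=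
      ⟨n / r, n % r, Nat.mod_lt _ hr0, (Nat.div_add_mod n r).symm⟩
    have hmod : n % r = s := by
      rw [hn_eq, Nat.mul_add_mod, Nat.mod_eq_of_lt hsr]
    rcases Nat.eq_zero_or_pos s with hs0 | hs0
    · have e0 : j0 = 0 := by rw [hj0_def, hmod, hs0, Nat.sub_zero, Nat.mod_self]
      have e1 : n + r - 1 = r * d + (r - 1) := by omega
      have e2 : q = d := by
        rw [hq_def, e1, Nat.mul_add_div hr0, Nat.div_eq_of_lt (by omega), Nat.add_zero]
      rw [e0, e2]; omega
    · have e0 : j0 = r - s := by rw [hj0_def, hmod, Nat.mod_eq_of_lt (by omega)]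
      have e1 : n + r - 1 = r * (d + 1) + (s - 1) := by
        have : r * (d + 1) = r * d + r := by ring
        omega
      have e2 : q = d + 1 := by
        rw [hq_def, e1, Nat.mul_add_div hr0, Nat.div_eq_of_lt (by omega), Nat.add_zero]
      have : r * (d + 1) = r * d + r := by ring
      rw [e0, e2]; omega
  -- rewrite p
  have hX : (∑ i ∈ Finset.Ico 1 r, (X : Polynomial ℝ) ^ i) =
      X * ∑ i ∈ Finset.range (r - 1), X ^ i := by
    rw [Finset.mul_sum, Finset.sum_Ico_eq_sum_range]
    exact Finset.sum_congr rfl fun i _ => by rw [pow_add, pow_one]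
  have hp' : p = X ^ n * ∑ j : Fin r, X ^ (j : ℕ) * Polynomial.expand ℝ r (h j) := by
    simp only [Polynomial.expand_eq_comp_X_pow]
    rw [hp, hX, mul_pow, hsec]
  -- key coefficient identity
  have key : ∀ k, p.coeff (r * k) =
      if q ≤ k then (h ⟨j0, hj0lt⟩).coeff (k - q) else 0 := by
    intro k
    rw [hp', mul_comm, Polynomial.coeff_mul_X_pow']
    by_cases hnk : n ≤ r * k
    · rw [if_pos hnk, Polynomial.finset_sum_coeff]
      rw [Finset.sum_eq_single (⟨j0, hj0lt⟩ : Fin r)]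
      · rw [mul_comm, Polynomial.coeff_mul_X_pow']
        by_cases hqk : q ≤ k
        · obtain ⟨t, ht⟩ := Nat.exists_eq_add_of_le hqk
          have hrk : r * k = n + j0 + r * t := by
            rw [ht, Nat.mul_add, ← hq]
          have hidx : r * k - n = j0 + r * t := by omega
          rw [hidx, if_pos (Nat.le_add_right _ _), Nat.add_sub_cancel_left,
            Polynomial.coeff_expand hr0, if_pos (dvd_mul_right r t),
            Nat.mul_div_cancel_left _ hr0, if_pos hqk]
          congr 1
          omega
        · have hk1 : r * (k + 1) ≤ r * q := Nat.mul_le_mul_left r (by omega)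
          have : r * (k + 1) = r * k + r := by ring
          rw [if_neg (by omega), if_neg hqk]
      · intro j _ hne
        rw [mul_comm, Polynomial.coeff_mul_X_pow']
        split_ifs with h1
        · rw [Polynomial.coeff_expand hr0]
          split_ifs with h2
          · exfalso
            obtain ⟨c, hc⟩ := h2
            have hcle : r * c ≤ r * k := by omega
            have e2 : n + (j : ℕ) = r * (k - c) := by
              have hck : c ≤ k := Nat.le_of_mul_le_mul_left hcle hr0
              have : r * (k - c) + r * c = r * k := by
                rw [← Nat.mul_add]; congr 1; omega
              omega
            have m1 : (n + (j : ℕ)) % r = 0 := by rw [e2]; exact Nat.mul_mod_right r _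
            have m2 : (n + j0) % r = 0 := by rw [hq]; exact Nat.mul_mod_right r _
            have hmeq : (j : ℕ) % r = j0 % r :=
              Nat.ModEq.add_left_cancel' n (show (n + (j:ℕ)) % r = (n + j0) % r by
                rw [m1, m2])
            rw [Nat.mod_eq_of_lt j.isLt, Nat.mod_eq_of_lt hj0lt] at hmeq
            exact hne (Fin.ext hmeq)
          · rfl
        · rfl
      · intro hmem; exact absurd (Finset.mem_univ _) hmem
    · rw [if_neg hnk, if_neg]
      intro hqk
      have : r * q ≤ r * k := Nat.mul_le_mul_left r hqk
      omega
  -- conclude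
  ext k
  rw [Polynomial.finset_sum_coeff, mul_comm,
    Polynomial.coeff_mul_X_pow']
  simp only [Polynomial.coeff_C_mul, Polynomial.coeff_X_pow, mul_ite, mul_one, mul_zero]
  rw [Finset.sum_ite_eq (Finset.range (p.natDegree + 1)) k
    (fun k' => p.coeff (r * k'))]
  have hz : (if k ∈ Finset.range (p.natDegree + 1) then p.coeff (r * k) else 0)
      = p.coeff (r * k) := by
    split_ifs with hmem
    · rfl
    · symm
      apply Polynomial.coeff_eq_zero_of_natDegree_lt
      rw [Finset.mem_range] at hmem
      have hk1 : k ≤ r * k := Nat.le_mul_of_pos_left k hr0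
      omega
  rw [hz, key k]
end
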